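/- arXiv:1307.5688 — 9 statements merged into one kernel-verified Lean document; each statement's English description precedes it below -/
import Mathlib

section
/- Let R ≥ 1, v, u ∈ ℝ³, and set v⁰ = √(1 + R⁻²|v|²), u⁰ = √(1 + R⁻²|u|²), g = √(2v⁰u⁰ − 2 − 2R⁻²(v·u)). Then |v − u|/√(v⁰u⁰) ≤ R·g ≤ |v − u|. -/
open Real

noncomputable section

/-- `v⁰ = √(1 + R⁻²|v|²)` -/
def v0 (R : ℝ) (v : EuclideanSpace ℝ (Fin 3)) : ℝ :=
  Real.sqrt (1 + R⁻¹ ^ 2 * ‖v‖ ^ 2)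

/-- relative momentum `g = √(2v⁰u⁰ − 2 − 2R⁻²(v·u))` -/
def gRel (R : ℝ) (v u : EuclideanSpace ℝ (Fin 3)) : ℝ :=
  Real.sqrt (2 * v0 R v * v0 R u - 2 - 2 * R⁻¹ ^ 2 * inner ℝ v u)

/-- total energy `s = 4 + g²` -/
def sRel (R : ℝ) (v u : EuclideanSpace ℝ (Fin 3)) : ℝ :=
  4 + gRel R v u ^ 2

set_option maxHeartbeats 1000000 in
theorem stmt1 (R : ℝ) (hR : 1 ≤ R) (v u : EuclideanSpace ℝ (Fin 3)) :
    ‖v - u‖ / Real.sqrt (v0 R v * v0 R u) ≤ R * gRel R v u ∧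
      R * gRel R v u ≤ ‖v - u‖ := by
  have hR0 : (0:ℝ) < R := lt_of_lt_of_le one_pos hR
  have hRne : R ≠ 0 := ne_of_gt hR0
  set t : ℝ := inner ℝ v u with ht
  set α : ℝ := R⁻¹ ^ 2 * ‖v‖ ^ 2 with hα
  set β : ℝ := R⁻¹ ^ 2 * ‖u‖ ^ 2 with hβ
  set τ : ℝ := R⁻¹ ^ 2 * t with hτ
  set a := v0 R v with ha
  set b := v0 R u with hb
  have ha0 : 0 ≤ a := by rw [ha, v0]; exact Real.sqrt_nonneg _
  have hb0 : 0 ≤ b := by rw [hb, v0]; exact Real.sqrt_nonneg _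
  have hα0 : 0 ≤ α := by rw [hα]; positivity
  have hβ0 : 0 ≤ β := by rw [hβ]; positivity
  have hasq : a ^ 2 = 1 + α := by
    rw [hα, ha, v0]; exact Real.sq_sqrt (by positivity)
  have hbsq : b ^ 2 = 1 + β := by
    rw [hβ, hb, v0]; exact Real.sq_sqrt (by positivity)
  have hts : t ^ 2 ≤ ‖v‖ ^ 2 * ‖u‖ ^ 2 := by
    have h := abs_real_inner_le_norm v u
    rw [ht]
    nlinarith [abs_nonneg (inner ℝ v u : ℝ), sq_abs (inner ℝ v u : ℝ),
      norm_nonneg v, norm_nonneg u]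
  have hcs : τ ^ 2 ≤ α * β := by
    rw [hτ, hα, hβ]
    have h4 : (0:ℝ) ≤ R⁻¹ ^ 2 * R⁻¹ ^ 2 := by positivity
    nlinarith [mul_le_mul_of_nonneg_left hts h4]
  have hN : R⁻¹ ^ 2 * ‖v - u‖ ^ 2 = α + β - 2 * τ := by
    rw [hα, hβ, hτ, ht]
    have hn : ‖v - u‖ ^ 2 = ‖v‖ ^ 2 - 2 * inner ℝ v u + ‖u‖ ^ 2 :=
      norm_sub_sq_real v u
    rw [hn]; ring
  have h2τ : 2 * τ ≤ α + β := by
    have h0 : (0:ℝ) ≤ R⁻¹ ^ 2 * ‖v - u‖ ^ 2 := by positivity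
    rw [hN] at h0; linarith
  have habsq' : (a * b) ^ 2 = (1 + α) * (1 + β) := by
    rw [mul_pow, hasq, hbsq]
  have habsq : (1 + τ) ^ 2 ≤ (a * b) ^ 2 := by
    rw [habsq']; nlinarith [hcs, h2τ]
  have hab : 1 + τ ≤ a * b := by
    nlinarith [habsq, mul_nonneg ha0 hb0]
  have hab1 : 1 ≤ a * b := by
    nlinarith [habsq', hα0, hβ0, mul_nonneg ha0 hb0, mul_nonneg hα0 hβ0]
  have harg : 2 * a * b - 2 - 2 * R⁻¹ ^ 2 * t = 2 * (a * b) - 2 - 2 * τ := by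
    rw [hτ]; ring
  have hg2 : gRel R v u ^ 2 = 2 * (a * b) - 2 - 2 * τ := by
    rw [gRel, ← ha, ← hb, ← ht, harg]
    exact Real.sq_sqrt (by linarith)
  have hg0 : 0 ≤ gRel R v u := by rw [gRel]; exact Real.sqrt_nonneg _
  have h1 : ‖v - u‖ ^ 2 = R ^ 2 * (R⁻¹ ^ 2 * ‖v - u‖ ^ 2) := by
    field_simp
  constructor
  · -- lower bound
    have hs0 : 0 < Real.sqrt (a * b) := Real.sqrt_pos.mpr (by linarith)
    have h3 : α + β - 2 * τ ≤ (2 * (a * b) - 2 - 2 * τ) * (a * b) := by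
      nlinarith [hcs, habsq', sq_nonneg (a * b - 1 - τ)]
    have hlow2 : ‖v - u‖ ^ 2 ≤ (R * gRel R v u * Real.sqrt (a * b)) ^ 2 := by
      rw [mul_pow, mul_pow, hg2, Real.sq_sqrt (by linarith : (0:ℝ) ≤ a * b),
        h1, hN]
      nlinarith [mul_le_mul_of_nonneg_left h3 (sq_nonneg R)]
    have hlow : ‖v - u‖ ≤ R * gRel R v u * Real.sqrt (a * b) := by
      have h := Real.sqrt_le_sqrt hlow2
      rwa [Real.sqrt_sq (norm_nonneg _),
        Real.sqrt_sq (by positivity : (0:ℝ) ≤ R * gRel R v u * Real.sqrt (a * b))] at h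
    rw [div_le_iff₀ hs0]
    exact hlow
  · -- upper bound
    have h3 : 2 * (a * b) - 2 - 2 * τ ≤ α + β - 2 * τ := by
      nlinarith [sq_nonneg (a - b), hasq, hbsq]
    have hup2 : (R * gRel R v u) ^ 2 ≤ ‖v - u‖ ^ 2 := by
      rw [mul_pow, hg2, h1, hN]
      exact mul_le_mul_of_nonneg_left h3 (sq_nonneg R)
    have h := Real.sqrt_le_sqrt hup2
    rwa [Real.sqrt_sq (mul_nonneg hR0.le hg0),
      Real.sqrt_sq (norm_nonneg _)] at h

end
end

section
/- Let R ≥ 1, v, u ∈ ℝ³, and set v⁰ = √(1 + R⁻²|v|²), u⁰ = √(1 + R⁻²|u|²), g = √(2v⁰u⁰ − 2 − 2R⁻²(v·u)). Then R²g² = |v − u|² − ((v − u)·(v + u))²/(R²(v⁰ + u⁰)²); equivalently, writing θ₀ for the angle between v + u and v − u (for v ≠ u, v + u ≠ 0), R·g = |v − u|·√(1 − |v + u|²cos²θ₀/(R²(v⁰ + u⁰)²)). -/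
open Real

noncomputable section

lemma keylem (nd np Q c : ℝ) (hnd : nd ≠ 0) (hnp : np ≠ 0) (hc : c ≠ 0) :
    nd ^ 2 - Q ^ 2 / c = nd ^ 2 * (1 - np ^ 2 * (Q / (np * nd)) ^ 2 / c) := by
  field_simp

theorem stmt2 (R : ℝ) (hR : 1 ≤ R) (v u : EuclideanSpace ℝ (Fin 3)) :
    R ^ 2 * gRel R v u ^ 2 =
      ‖v - u‖ ^ 2 -
        (inner ℝ (v - u) (v + u) : ℝ) ^ 2 / (R ^ 2 * (v0 R v + v0 R u) ^ 2) ∧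
    (v ≠ u → v + u ≠ 0 →
      R * gRel R v u =
        ‖v - u‖ *
          Real.sqrt (1 -
            ‖v + u‖ ^ 2 *
              ((inner ℝ (v + u) (v - u) : ℝ) / (‖v + u‖ * ‖v - u‖)) ^ 2 /
              (R ^ 2 * (v0 R v + v0 R u) ^ 2))) := by
  have hR0 : (0:ℝ) < R := lt_of_lt_of_le one_pos hR
  have hR2 : (R:ℝ) ≠ 0 := ne_of_gt hR0
  have hRR : R ^ 2 * R⁻¹ ^ 2 = 1 := by field_simp
  set a := v0 R v with ha
  set b := v0 R u with hb
  set nv := ‖v‖ with hnv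
  set nu := ‖u‖ with hnu
  set P : ℝ := inner ℝ v u with hPdef
  have hA : (0:ℝ) ≤ 1 + R⁻¹ ^ 2 * nv ^ 2 := by positivity
  have hB : (0:ℝ) ≤ 1 + R⁻¹ ^ 2 * nu ^ 2 := by positivity
  have ha2 : a ^ 2 = 1 + R⁻¹ ^ 2 * nv ^ 2 := Real.sq_sqrt hA
  have hb2 : b ^ 2 = 1 + R⁻¹ ^ 2 * nu ^ 2 := Real.sq_sqrt hB
  have ha0 : (0:ℝ) ≤ a := Real.sqrt_nonneg _
  have hb0 : (0:ℝ) ≤ b := Real.sqrt_nonneg _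
  have hnv0 : (0:ℝ) ≤ nv := norm_nonneg v
  have hnu0 : (0:ℝ) ≤ nu := norm_nonneg u
  have hr : (0:ℝ) < R⁻¹ ^ 2 := by positivity
  have ha1 : (1:ℝ) ≤ a := by nlinarith [ha2, mul_nonneg (mul_nonneg hr.le (norm_nonneg v)) (norm_nonneg v)]
  have hb1 : (1:ℝ) ≤ b := by nlinarith [hb2]
  have hab : (0:ℝ) < a + b := by linarith
  have habne : a + b ≠ 0 := ne_of_gt hab
  have hP : P ≤ nv * nu := real_inner_le_norm v u
  -- radicand nonneg
  have h1 : (1 + R⁻¹ ^ 2 * (nv * nu)) ^ 2 ≤ (a * b) ^ 2 := by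
    nlinarith [ha2, hb2, sq_nonneg (nv - nu), hr.le, mul_nonneg hnv0 hnu0]
  have h2 : 1 + R⁻¹ ^ 2 * (nv * nu) ≤ a * b := by
    nlinarith [h1, mul_nonneg ha0 hb0, mul_nonneg (mul_nonneg hr.le hnv0) hnu0]
  have h3 : R⁻¹ ^ 2 * P ≤ R⁻¹ ^ 2 * (nv * nu) := mul_le_mul_of_nonneg_left hP hr.le
  have hrad : (0:ℝ) ≤ 2 * a * b - 2 - 2 * R⁻¹ ^ 2 * P := by nlinarith
  have hg2 : gRel R v u ^ 2 = 2 * a * b - 2 - 2 * R⁻¹ ^ 2 * P := by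
    rw [gRel]; exact Real.sq_sqrt hrad
  have hinner1 : (inner ℝ (v - u) (v + u) : ℝ) = nv ^ 2 - nu ^ 2 := by
    rw [inner_sub_left, inner_add_right, inner_add_right, real_inner_comm u v,
      real_inner_self_eq_norm_sq, real_inner_self_eq_norm_sq]
    ring
  have hns : ‖v - u‖ ^ 2 = nv ^ 2 + nu ^ 2 - 2 * P := by
    rw [norm_sub_sq_real]; rw [hnv, hnu, hPdef]; ring
  have part1 : R ^ 2 * gRel R v u ^ 2 =
      ‖v - u‖ ^ 2 - (inner ℝ (v - u) (v + u) : ℝ) ^ 2 / (R ^ 2 * (a + b) ^ 2) := by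
    rw [hg2, hinner1, hns]
    have hdiff : nv ^ 2 - nu ^ 2 = R ^ 2 * (a - b) * (a + b) := by
      linear_combination -R^2*ha2 + R^2*hb2 - (nv^2-nu^2)*hRR
    rw [hdiff]
    have hq : (R ^ 2 * (a - b) * (a + b)) ^ 2 / (R ^ 2 * (a + b) ^ 2) = R ^ 2 * (a - b) ^ 2 := by
      field_simp
    rw [hq]
    linear_combination R^2*ha2 + R^2*hb2 + (nv^2+nu^2-2*P)*hRR
  refine ⟨part1, ?_⟩
  intro hvu hvpu
  have hnd : (0:ℝ) < ‖v - u‖ := by rw [norm_pos_iff]; exact sub_ne_zero_of_ne hvu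
  have hnp : (0:ℝ) < ‖v + u‖ := by rwa [norm_pos_iff]
  have hg0 : 0 ≤ gRel R v u := Real.sqrt_nonneg _
  have hRg : R * gRel R v u = Real.sqrt (R ^ 2 * gRel R v u ^ 2) := by
    rw [show R ^ 2 * gRel R v u ^ 2 = (R * gRel R v u) ^ 2 by ring,
      Real.sqrt_sq (mul_nonneg (le_of_lt hR0) hg0)]
  rw [hRg, part1]
  have hsymm : (inner ℝ (v + u) (v - u) : ℝ) = inner ℝ (v - u) (v + u) := real_inner_comm _ _
  set Q : ℝ := inner ℝ (v - u) (v + u) with hQ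
  set nd := ‖v - u‖ with hnd'
  set np := ‖v + u‖ with hnp'
  clear_value Q nd np
  have key : nd ^ 2 - Q ^ 2 / (R ^ 2 * (a + b) ^ 2)
      = nd ^ 2 * (1 - np ^ 2 * (Q / (np * nd)) ^ 2 / (R ^ 2 * (a + b) ^ 2)) :=
    keylem nd np Q _ (ne_of_gt hnd) (ne_of_gt hnp) (mul_ne_zero (pow_ne_zero 2 hR2) (pow_ne_zero 2 habne))
  rw [hsymm, key, Real.sqrt_mul (sq_nonneg _), Real.sqrt_sq (le_of_lt hnd)]

end
end

section
/- Let R ≥ 1, v, u ∈ ℝ³, and set v⁰ = √(1 + R⁻²|v|²), u⁰ = √(1 + R⁻²|u|²), g = √(2v⁰u⁰ − 2 − 2R⁻²(v·u)), s = 4 + g². Then s ≥ v⁰/u⁰ + u⁰/v⁰; in particular √s ≥ max{√(v⁰/u⁰), √(u⁰/v⁰)}. -/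
open Real

noncomputable section

lemma stmt4_aux (a b x y : ℝ) (ha2 : a ^ 2 = 1 + x ^ 2) (hb2 : b ^ 2 = 1 + y ^ 2)
    (ha0 : 0 < a) (hb0 : 0 < b) :
    a ^ 2 + b ^ 2 ≤ (2 + 2 * a * b - 2 * x * y) * (a * b) := by
  nlinarith [sq_nonneg (x * b - a * y), mul_pos ha0 hb0]

theorem stmt4 (R : ℝ) (hR : 1 ≤ R) (v u : EuclideanSpace ℝ (Fin 3)) :
    v0 R v / v0 R u + v0 R u / v0 R v ≤ sRel R v u ∧
      max (Real.sqrt (v0 R v / v0 R u)) (Real.sqrt (v0 R u / v0 R v)) ≤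
        Real.sqrt (sRel R v u) := by
  have hR0 : (0:ℝ) < R := lt_of_lt_of_le one_pos hR
  set x : ℝ := R⁻¹ * ‖v‖ with hxdef
  set y : ℝ := R⁻¹ * ‖u‖ with hydef
  have hx : 0 ≤ x := mul_nonneg (by positivity) (norm_nonneg _)
  have hy : 0 ≤ y := mul_nonneg (by positivity) (norm_nonneg _)
  set a : ℝ := v0 R v with hadef
  set b : ℝ := v0 R u with hbdef
  have hxe : R⁻¹ ^ 2 * ‖v‖ ^ 2 = x ^ 2 := by rw [hxdef]; ring
  have hye : R⁻¹ ^ 2 * ‖u‖ ^ 2 = y ^ 2 := by rw [hydef]; ring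
  have ha2 : a ^ 2 = 1 + x ^ 2 := by
    rw [hadef, v0, hxe, Real.sq_sqrt (by positivity)]
  have hb2 : b ^ 2 = 1 + y ^ 2 := by
    rw [hbdef, v0, hye, Real.sq_sqrt (by positivity)]
  have ha1 : 1 ≤ a := by
    rw [hadef, v0]
    have h := Real.sqrt_le_sqrt (le_add_of_nonneg_right (by positivity) :
      (1:ℝ) ≤ 1 + R⁻¹ ^ 2 * ‖v‖ ^ 2)
    rwa [Real.sqrt_one] at h
  have hb1 : 1 ≤ b := by
    rw [hbdef, v0]
    have h := Real.sqrt_le_sqrt (le_add_of_nonneg_right (by positivity) :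
      (1:ℝ) ≤ 1 + R⁻¹ ^ 2 * ‖u‖ ^ 2)
    rwa [Real.sqrt_one] at h
  have ha0 : 0 < a := lt_of_lt_of_le one_pos ha1
  have hb0 : 0 < b := lt_of_lt_of_le one_pos hb1
  -- Cauchy–Schwarz
  have hcs : |(inner ℝ v u : ℝ)| ≤ ‖v‖ * ‖u‖ := abs_real_inner_le_norm v u
  have hinner : R⁻¹ ^ 2 * (inner ℝ v u : ℝ) ≤ x * y := by
    have h1 : (inner ℝ v u : ℝ) ≤ ‖v‖ * ‖u‖ := le_trans (le_abs_self _) hcs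
    have h2 : x * y = R⁻¹ ^ 2 * (‖v‖ * ‖u‖) := by rw [hxdef, hydef]; ring
    rw [h2]
    exact mul_le_mul_of_nonneg_left h1 (by positivity)
  have hab : 1 + x * y ≤ a * b := by
    have habsq : (a * b) ^ 2 = (1 + x ^ 2) * (1 + y ^ 2) := by
      rw [mul_pow, ha2, hb2]
    nlinarith [sq_nonneg (x - y), mul_pos ha0 hb0, mul_nonneg hx hy]
  -- the radicand is nonnegative
  have hrad : 0 ≤ 2 * a * b - 2 - 2 * R⁻¹ ^ 2 * (inner ℝ v u : ℝ) := by
    nlinarith [hinner, hab]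
  have hg2 : gRel R v u ^ 2 = 2 * a * b - 2 - 2 * R⁻¹ ^ 2 * (inner ℝ v u : ℝ) := by
    rw [gRel, Real.sq_sqrt hrad]
  have hs : sRel R v u = 2 + 2 * a * b - 2 * R⁻¹ ^ 2 * (inner ℝ v u : ℝ) := by
    rw [sRel, hg2]; ring
  have hslb : 2 + 2 * a * b - 2 * x * y ≤ sRel R v u := by
    rw [hs]; nlinarith [hinner]
  have key : a / b + b / a ≤ 2 + 2 * a * b - 2 * x * y := by
    have h1 : a / b + b / a = (a ^ 2 + b ^ 2) / (a * b) := by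
      field_simp
    rw [h1, div_le_iff₀ (by positivity)]
    exact stmt4_aux a b x y ha2 hb2 ha0 hb0
  have hmain : a / b + b / a ≤ sRel R v u := le_trans key hslb
  refine ⟨hmain, ?_⟩
  have h1 : a / b ≤ sRel R v u := by
    have : 0 ≤ b / a := by positivity
    linarith
  have h2 : b / a ≤ sRel R v u := by
    have : 0 ≤ a / b := by positivity
    linarith
  exact max_le (Real.sqrt_le_sqrt h1) (Real.sqrt_le_sqrt h2)

end
end

section
/- Fix R ≥ 1 and u ∈ ℝ³, set v⁰ = √(1 + R⁻²|v|²), u⁰ = √(1 + R⁻²|u|²), g = √(2v⁰u⁰ − 2 − 2R⁻²(v·u)), s = 4 + g². Then for v ≠ u and each i ∈ {1,2,3}: |∂_{v^i} g| ≤ u⁰√(v⁰u⁰)/R and |∂_{v^i} √s| ≤ u⁰√(v⁰u⁰)/R. -/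
open Real

noncomputable section

/-- the partial derivative in the `i`-th coordinate of `v` -/
def pderiv (i : Fin 3) (F : EuclideanSpace ℝ (Fin 3) → ℝ)
    (v : EuclideanSpace ℝ (Fin 3)) : ℝ :=
  fderiv ℝ F v (EuclideanSpace.single i 1)


/-- radicand of `gRel` is nonnegative -/
lemma aux_nonneg' (R : ℝ) (hR : 1 ≤ R) (v u : EuclideanSpace ℝ (Fin 3)) :
    0 ≤ 2 * Real.sqrt (1 + R⁻¹^2 * ‖v‖^2) * Real.sqrt (1 + R⁻¹^2 * ‖u‖^2)
      - 2 - 2 * R⁻¹ ^ 2 * inner ℝ v u := by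
  have hR0 : (0:ℝ) < R := lt_of_lt_of_le one_pos hR
  have hc : (0:ℝ) < R⁻¹^2 := by positivity
  have hV1 : 1 ≤ Real.sqrt (1 + R⁻¹^2 * ‖v‖^2) := by
    rw [Real.one_le_sqrt]; nlinarith [sq_nonneg ‖v‖]
  have hU1 : 1 ≤ Real.sqrt (1 + R⁻¹^2 * ‖u‖^2) := by
    rw [Real.one_le_sqrt]; nlinarith [sq_nonneg ‖u‖]
  have hVsq : Real.sqrt (1 + R⁻¹^2 * ‖v‖^2)^2 = 1 + R⁻¹^2 * ‖v‖^2 :=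
    Real.sq_sqrt (by positivity)
  have hUsq : Real.sqrt (1 + R⁻¹^2 * ‖u‖^2)^2 = 1 + R⁻¹^2 * ‖u‖^2 :=
    Real.sq_sqrt (by positivity)
  set V : ℝ := Real.sqrt (1 + R⁻¹^2 * ‖v‖^2)
  set U : ℝ := Real.sqrt (1 + R⁻¹^2 * ‖u‖^2)
  set c : ℝ := R⁻¹^2
  set t : ℝ := (inner ℝ v u : ℝ) with htdef
  have ht2 : t^2 ≤ ‖v‖^2 * ‖u‖^2 := by
    have h := real_inner_mul_inner_self_le v u
    rw [real_inner_self_eq_norm_sq, real_inner_self_eq_norm_sq] at h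
    nlinarith [h]
  have hsub : (0:ℝ) ≤ ‖v - u‖^2 := sq_nonneg _
  rw [norm_sub_sq_real, ← htdef] at hsub
  have key1 : 0 ≤ c * (‖v‖^2 - 2*t + ‖u‖^2) := mul_nonneg hc.le hsub
  have key2 : 0 ≤ c^2 * (‖v‖^2 * ‖u‖^2 - t^2) := mul_nonneg (sq_nonneg c) (by linarith)
  have hprod : (V*U)^2 = (1 + c*‖v‖^2) * (1 + c*‖u‖^2) := by rw [mul_pow, hVsq, hUsq]
  have hsq : (1 + c*t)^2 ≤ (V*U)^2 := by nlinarith [hprod, key1, key2]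
  have hVU1 : 1 ≤ V*U := by nlinarith [hV1, hU1]
  nlinarith [hsq, hVU1]

/-- radicand of `gRel` is positive when `v ≠ u` -/
lemma aux_pos' (R : ℝ) (hR : 1 ≤ R) (v u : EuclideanSpace ℝ (Fin 3)) (hvu : v ≠ u) :
    0 < 2 * Real.sqrt (1 + R⁻¹^2 * ‖v‖^2) * Real.sqrt (1 + R⁻¹^2 * ‖u‖^2)
      - 2 - 2 * R⁻¹ ^ 2 * inner ℝ v u := by
  have hR0 : (0:ℝ) < R := lt_of_lt_of_le one_pos hR
  have hc : (0:ℝ) < R⁻¹^2 := by positivity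
  have hV1 : 1 ≤ Real.sqrt (1 + R⁻¹^2 * ‖v‖^2) := by
    rw [Real.one_le_sqrt]; nlinarith [sq_nonneg ‖v‖]
  have hU1 : 1 ≤ Real.sqrt (1 + R⁻¹^2 * ‖u‖^2) := by
    rw [Real.one_le_sqrt]; nlinarith [sq_nonneg ‖u‖]
  have hVsq : Real.sqrt (1 + R⁻¹^2 * ‖v‖^2)^2 = 1 + R⁻¹^2 * ‖v‖^2 :=
    Real.sq_sqrt (by positivity)
  have hUsq : Real.sqrt (1 + R⁻¹^2 * ‖u‖^2)^2 = 1 + R⁻¹^2 * ‖u‖^2 :=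
    Real.sq_sqrt (by positivity)
  set V : ℝ := Real.sqrt (1 + R⁻¹^2 * ‖v‖^2)
  set U : ℝ := Real.sqrt (1 + R⁻¹^2 * ‖u‖^2)
  set c : ℝ := R⁻¹^2
  set t : ℝ := (inner ℝ v u : ℝ) with htdef
  have ht2 : t^2 ≤ ‖v‖^2 * ‖u‖^2 := by
    have h := real_inner_mul_inner_self_le v u
    rw [real_inner_self_eq_norm_sq, real_inner_self_eq_norm_sq] at h
    nlinarith [h]
  have hsub : (0:ℝ) < ‖v - u‖^2 := by
    have hne : (0:ℝ) < ‖v - u‖ := norm_sub_pos_iff.mpr hvu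
    positivity
  rw [norm_sub_sq_real, ← htdef] at hsub
  have key1 : 0 < c * (‖v‖^2 - 2*t + ‖u‖^2) := mul_pos hc hsub
  have key2 : 0 ≤ c^2 * (‖v‖^2 * ‖u‖^2 - t^2) := mul_nonneg (sq_nonneg c) (by linarith)
  have hprod : (V*U)^2 = (1 + c*‖v‖^2) * (1 + c*‖u‖^2) := by rw [mul_pow, hVsq, hUsq]
  have hsq : (1 + c*t)^2 < (V*U)^2 := by nlinarith [hprod, key1, key2]
  have hVU1 : 1 ≤ V*U := by nlinarith [hV1, hU1]
  nlinarith [hsq, hVU1]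

set_option maxHeartbeats 1000000 in
/-- main arithmetic bound -/
lemma key_bound' (R : ℝ) (hR : 1 ≤ R) (u v : EuclideanSpace ℝ (Fin 3)) (i : Fin 3)
    (V U r : ℝ) (hV : V = Real.sqrt (1 + R⁻¹^2 * ‖v‖^2))
    (hU : U = Real.sqrt (1 + R⁻¹^2 * ‖u‖^2)) (hr : 0 < r)
    (hra : 2 * V * U - 2 - 2 * R⁻¹ ^ 2 * inner ℝ v u ≤ r^2) :
    |(1 / (2 * r)) * (2 * ((1 / (2 * V)) * (R⁻¹^2 * (2 * v i))) * U - 2 * R⁻¹^2 * u i)| ≤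
      U * Real.sqrt (V * U) / R := by
  have hR0 : (0:ℝ) < R := lt_of_lt_of_le one_pos hR
  have hc : (0:ℝ) < R⁻¹^2 := by positivity
  have hV1 : 1 ≤ V := by rw [hV, Real.one_le_sqrt]; nlinarith [sq_nonneg ‖v‖]
  have hU1 : 1 ≤ U := by rw [hU, Real.one_le_sqrt]; nlinarith [sq_nonneg ‖u‖]
  have hV0 : 0 < V := lt_of_lt_of_le one_pos hV1
  have hU0 : 0 < U := lt_of_lt_of_le one_pos hU1
  have hVsq : V^2 = 1 + R⁻¹^2 * ‖v‖^2 := by rw [hV]; exact Real.sq_sqrt (by positivity)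
  have hUsq : U^2 = 1 + R⁻¹^2 * ‖u‖^2 := by rw [hU]; exact Real.sq_sqrt (by positivity)
  set c : ℝ := R⁻¹^2 with hcdef
  set t : ℝ := (inner ℝ v u : ℝ) with htdef
  set p : ℝ := v i with hpdef
  set q : ℝ := u i with hqdef
  set a : ℝ := 2 * V * U - 2 - 2 * c * t with hadef
  have hann : 0 ≤ a := by
    have h := aux_nonneg' R hR v u
    rw [← hV, ← hU] at h
    exact h
  set pd : ℝ := (1 / (2 * r)) * (2 * ((1 / (2 * V)) * (c * (2 * p))) * U - 2 * c * q)
    with hpddef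
  set T : ℝ := U * Real.sqrt (V * U) / R with hTdef
  have hsVU : Real.sqrt (V * U) ^ 2 = V * U := Real.sq_sqrt (by positivity)
  have hT2 : T^2 = c * U^3 * V := by
    rw [hTdef, div_pow, mul_pow, hsVU, hcdef]
    field_simp
  -- component bound via inner product with the basis vector
  have hDe : (inner ℝ (U • v - V • u) (EuclideanSpace.single i (1:ℝ)) : ℝ) = U * p - V * q := by
    simp [inner_sub_left, real_inner_smul_left, EuclideanSpace.inner_single_right,
      hpdef, hqdef]
  have hF1 : (U * p - V * q)^2 ≤ ‖U • v - V • u‖^2 := by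
    have h := real_inner_mul_inner_self_le (U • v - V • u) (EuclideanSpace.single i (1:ℝ))
    rw [hDe, real_inner_self_eq_norm_sq, real_inner_self_eq_norm_sq] at h
    have he1 : ‖EuclideanSpace.single i (1:ℝ)‖ = 1 := by simp
    rw [he1, one_pow, mul_one] at h
    rw [pow_two]
    exact h
  have hWexp : ‖U • v - V • u‖^2 = U^2 * ‖v‖^2 - 2 * (U * V) * t + V^2 * ‖u‖^2 := by
    rw [norm_sub_sq_real, real_inner_smul_left, real_inner_smul_right,
      norm_smul, norm_smul, Real.norm_eq_abs, Real.norm_eq_abs, mul_pow, mul_pow,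
      sq_abs, sq_abs, ← htdef]
    ring
  have hF2 : c * ‖U • v - V • u‖^2 = U * V * a - (U - V)^2 := by
    rw [hWexp, hadef]
    have h1 : c * ‖v‖^2 = V^2 - 1 := by rw [hVsq, hcdef]; ring
    have h2 : c * ‖u‖^2 = U^2 - 1 := by rw [hUsq, hcdef]; ring
    linear_combination (U^2) * h1 + (V^2) * h2
  have hpd : pd^2 * (r^2 * V^2) = c^2 * (U * p - V * q)^2 := by
    rw [hpddef]
    field_simp
  have hra' : a ≤ r^2 := hra
  have h10 : c^2 * (U * p - V * q)^2 ≤ T^2 * (r^2 * V^2) := by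
    have s1 : c^2 * (U * p - V * q)^2 ≤ c^2 * ‖U • v - V • u‖^2 :=
      mul_le_mul_of_nonneg_left hF1 (by positivity)
    have s2 : c * ‖U • v - V • u‖^2 ≤ U * V * a := by
      have := sq_nonneg (U - V); linarith [hF2]
    have s3 : c^2 * ‖U • v - V • u‖^2 ≤ c * (U * V * a) := by
      calc c^2 * ‖U • v - V • u‖^2 = c * (c * ‖U • v - V • u‖^2) := by ring
        _ ≤ c * (U * V * a) := mul_le_mul_of_nonneg_left s2 hc.le
    have s4 : c * (U * V * a) ≤ c * (U * V * r^2) :=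
      mul_le_mul_of_nonneg_left
        (mul_le_mul_of_nonneg_left hra' (show (0:ℝ) ≤ U * V by positivity)) hc.le
    have hUV1 : (1:ℝ) ≤ U * V := by
      calc (1:ℝ) = 1 * 1 := by ring
        _ ≤ U * V := mul_le_mul hU1 hV1 one_pos.le (by linarith)
    have hUV2 : (1:ℝ) ≤ (U * V)^2 := by
      calc (1:ℝ) = 1^2 := by ring
        _ ≤ (U * V)^2 := pow_le_pow_left₀ one_pos.le hUV1 2
    have hUV3 : U * V ≤ (U * V)^3 := by
      calc U * V = (U * V) * 1 := by ring
        _ ≤ (U * V) * (U * V)^2 := mul_le_mul_of_nonneg_left hUV2 (by linarith)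
        _ = (U * V)^3 := by ring
    have s5 : c * (U * V * r^2) ≤ c * ((U * V)^3 * r^2) := by
      have h : U * V * r^2 ≤ (U * V)^3 * r^2 :=
        mul_le_mul_of_nonneg_right hUV3 (sq_nonneg r)
      exact mul_le_mul_of_nonneg_left h hc.le
    have s6 : c * ((U * V)^3 * r^2) = T^2 * (r^2 * V^2) := by rw [hT2]; ring
    linarith [s1, s3, s4, s5, s6.le]
  have hpd2 : pd^2 ≤ T^2 := by
    have hpos : (0:ℝ) < r^2 * V^2 := by positivity
    have h := hpd ▸ h10
    exact le_of_mul_le_mul_right h hpos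
  have hT0 : 0 ≤ T := by rw [hTdef]; positivity
  calc |pd| = Real.sqrt (pd^2) := (Real.sqrt_sq_eq_abs pd).symm
    _ ≤ Real.sqrt (T^2) := Real.sqrt_le_sqrt hpd2
    _ = T := Real.sqrt_sq hT0

set_option maxHeartbeats 1000000 in
theorem stmt8 (R : ℝ) (hR : 1 ≤ R) (u v : EuclideanSpace ℝ (Fin 3)) (hvu : v ≠ u)
    (i : Fin 3) :
    |pderiv i (fun w => gRel R w u) v| ≤
        v0 R u * Real.sqrt (v0 R v * v0 R u) / R ∧
      |pderiv i (fun w => Real.sqrt (sRel R w u)) v| ≤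
        v0 R u * Real.sqrt (v0 R v * v0 R u) / R := by
  have hR0 : (0:ℝ) < R := lt_of_lt_of_le one_pos hR
  have hx : (1 : ℝ) + R⁻¹^2 * ‖v‖^2 ≠ 0 := by positivity
  have hApos := aux_pos' R hR v u hvu
  -- derivative of the radicand
  have hv0 : HasFDerivAt (fun w : EuclideanSpace ℝ (Fin 3) => Real.sqrt (1 + R⁻¹ ^ 2 * ‖w‖ ^ 2))
      ((1 / (2 * Real.sqrt (1 + R⁻¹^2 * ‖v‖^2))) •
        (R⁻¹^2 • (2 • (innerSL ℝ v).comp (ContinuousLinearMap.id ℝ _)))) v :=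
    (((hasFDerivAt_id v).norm_sq.const_mul (R⁻¹^2)).const_add 1).sqrt hx
  have hinner : HasFDerivAt (fun w : EuclideanSpace ℝ (Fin 3) => (inner ℝ w u : ℝ))
      ((fderivInnerCLM ℝ (v, u)).comp ((ContinuousLinearMap.id ℝ _).prod 0)) v :=
    (hasFDerivAt_id v).inner ℝ (hasFDerivAt_const u v)
  have hA' := (((hv0.const_mul 2).mul_const (Real.sqrt (1 + R⁻¹^2*‖u‖^2))).sub_const 2).sub
      (hinner.const_mul (2 * R⁻¹^2))
  -- the g part
  have hg := hA'.sqrt (ne_of_gt hApos)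
  have e1 : pderiv i (fun w => gRel R w u) v
      = (1 / (2 * Real.sqrt (2 * Real.sqrt (1 + R⁻¹^2*‖v‖^2) * Real.sqrt (1 + R⁻¹^2*‖u‖^2)
          - 2 - 2 * R⁻¹ ^ 2 * inner ℝ v u)))
        * (2 * ((1 / (2 * Real.sqrt (1 + R⁻¹^2*‖v‖^2))) * (R⁻¹^2 * (2 * v i)))
            * Real.sqrt (1 + R⁻¹^2*‖u‖^2) - 2 * R⁻¹^2 * u i) := by
    simp only [pderiv, gRel, v0]
    simp only [Pi.sub_def] at hg
    rw [hg.fderiv]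
    simp only [ContinuousLinearMap.smul_apply, ContinuousLinearMap.sub_apply,
      ContinuousLinearMap.comp_apply, ContinuousLinearMap.coe_id', id_eq,
      ContinuousLinearMap.prod_apply, ContinuousLinearMap.zero_apply, fderivInnerCLM_apply,
      innerSL_apply_apply, inner_zero_right, smul_eq_mul, nsmul_eq_mul,
      EuclideanSpace.inner_single_right, EuclideanSpace.inner_single_left, conj_trivial,
      Nat.cast_ofNat, add_zero]
    ring
  -- the sqrt-s part
  have hfun : (fun w => Real.sqrt (sRel R w u))
      = fun w : EuclideanSpace ℝ (Fin 3) => Real.sqrt (4 +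
          (2 * Real.sqrt (1 + R⁻¹^2*‖w‖^2) * Real.sqrt (1 + R⁻¹^2*‖u‖^2)
            - 2 - 2 * R⁻¹ ^ 2 * inner ℝ w u)) := by
    funext w
    simp only [sRel, gRel, v0]
    rw [Real.sq_sqrt (aux_nonneg' R hR w u)]
  have hSpos : (0:ℝ) < 4 + (2 * Real.sqrt (1 + R⁻¹^2*‖v‖^2) * Real.sqrt (1 + R⁻¹^2*‖u‖^2)
      - 2 - 2 * R⁻¹ ^ 2 * inner ℝ v u) := by linarith [hApos]
  have hs := (hA'.const_add 4).sqrt (ne_of_gt hSpos)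
  have e2 : pderiv i (fun w => Real.sqrt (sRel R w u)) v
      = (1 / (2 * Real.sqrt (4 + (2 * Real.sqrt (1 + R⁻¹^2*‖v‖^2) * Real.sqrt (1 + R⁻¹^2*‖u‖^2)
          - 2 - 2 * R⁻¹ ^ 2 * inner ℝ v u))))
        * (2 * ((1 / (2 * Real.sqrt (1 + R⁻¹^2*‖v‖^2))) * (R⁻¹^2 * (2 * v i)))
            * Real.sqrt (1 + R⁻¹^2*‖u‖^2) - 2 * R⁻¹^2 * u i) := by
    simp only [pderiv, hfun]
    simp only [Pi.sub_def] at hs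
    rw [hs.fderiv]
    simp only [ContinuousLinearMap.smul_apply, ContinuousLinearMap.sub_apply,
      ContinuousLinearMap.comp_apply, ContinuousLinearMap.coe_id', id_eq,
      ContinuousLinearMap.prod_apply, ContinuousLinearMap.zero_apply, fderivInnerCLM_apply,
      innerSL_apply_apply, inner_zero_right, smul_eq_mul, nsmul_eq_mul,
      EuclideanSpace.inner_single_right, EuclideanSpace.inner_single_left, conj_trivial,
      Nat.cast_ofNat, add_zero]
    ring
  constructor
  · rw [e1]
    have hr : 0 < Real.sqrt (2 * Real.sqrt (1 + R⁻¹^2*‖v‖^2) * Real.sqrt (1 + R⁻¹^2*‖u‖^2)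
        - 2 - 2 * R⁻¹ ^ 2 * inner ℝ v u) := Real.sqrt_pos.mpr hApos
    have hra := (Real.sq_sqrt hApos.le).ge
    exact key_bound' R hR u v i _ _ _ rfl rfl hr hra
  · rw [e2]
    have hr : 0 < Real.sqrt (4 + (2 * Real.sqrt (1 + R⁻¹^2*‖v‖^2) * Real.sqrt (1 + R⁻¹^2*‖u‖^2)
        - 2 - 2 * R⁻¹ ^ 2 * inner ℝ v u)) := Real.sqrt_pos.mpr hSpos
    have hra : 2 * Real.sqrt (1 + R⁻¹^2*‖v‖^2) * Real.sqrt (1 + R⁻¹^2*‖u‖^2)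
        - 2 - 2 * R⁻¹ ^ 2 * inner ℝ v u ≤ (Real.sqrt (4 + (2 * Real.sqrt (1 + R⁻¹^2*‖v‖^2)
          * Real.sqrt (1 + R⁻¹^2*‖u‖^2) - 2 - 2 * R⁻¹ ^ 2 * inner ℝ v u)))^2 := by
      rw [Real.sq_sqrt hSpos.le]; linarith
    exact key_bound' R hR u v i _ _ _ rfl rfl hr hra

end
end

section
/- For each α with 0 ≤ α < 3 there exists a constant C_α > 0 such that for all v ∈ ℝ³: ∫_{ℝ³} |v − u|^{−α} e^{−|u|²} du ≤ C_α (1 + |v|²)^{−α/2}. -/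
open Real MeasureTheory Metric Set
open scoped ENNReal

noncomputable section

local notation "E3" => EuclideanSpace ℝ (Fin 3)

lemma aux_exp1 {x : ℝ} (hx : 0 ≤ x) : (1 + x)^2 ≤ 192 * Real.exp (x/8) := by
  have h3 : Real.exp (x/8) = Real.exp (x/24) ^ 3 := by
    rw [← Real.exp_nat_mul]; ring_nf
  have h := Real.add_one_le_exp (x/24)
  have h2 : (x/24 + 1)^3 ≤ Real.exp (x/24)^3 := by
    apply pow_le_pow_left₀ (by positivity) h
  nlinarith [h2, h3]

lemma aux_exp2 {x : ℝ} (hx : 0 ≤ x) : (1 + x)^2 ≤ 48 * Real.exp (x/4) := by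
  have h3 : Real.exp (x/4) = Real.exp (x/12) ^ 3 := by
    rw [← Real.exp_nat_mul]; ring_nf
  have h := Real.add_one_le_exp (x/12)
  have h2 : (x/12 + 1)^3 ≤ Real.exp (x/12)^3 := by
    apply pow_le_pow_left₀ (by positivity) h
  nlinarith [h2, h3]

lemma gauss_lt_top (b : ℝ) (hb : 0 < b) :
    ∫⁻ u : E3, ENNReal.ofReal (Real.exp (-(b * ‖u‖^2))) < ⊤ := by
  have hi : Integrable (fun u : E3 => Real.exp (-(b * ‖u‖^2))) := by
    have h1 := (GaussianFourier.integrable_cexp_neg_mul_sq_norm_add_of_euclideanSpace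
      (b := (b:ℂ)) (by simpa using hb) 0 (0 : E3)).norm
    apply h1.congr
    filter_upwards with u
    rw [Complex.norm_exp]
    norm_num [← Complex.ofReal_pow]
  rw [← lintegral_enorm_of_nonneg (fun u => Real.exp_nonneg _)]
  exact hi.2

lemma K_lt_top {α : ℝ} (h0 : 0 < α) (h3 : α < 3) :
    ∫⁻ x : E3 in ball 0 1, ENNReal.ofReal (‖x‖ ^ (-α)) < ⊤ := by
  have hmeas : Measurable fun x : E3 => ‖x‖ ^ (-α) := by fun_prop
  rw [lintegral_eq_lintegral_meas_le _
    (Filter.Eventually.of_forall fun x => Real.rpow_nonneg (norm_nonneg x) _) hmeas.aemeasurable]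
  have hsub : ∀ t : ℝ, t ∈ Ioi (0:ℝ) →
      {a : E3 | t ≤ ‖a‖ ^ (-α)} ⊆ closedBall 0 (t ^ (-α)⁻¹) := by
    intro t ht a ha
    simp only [mem_setOf_eq] at ha
    rcases eq_or_ne a 0 with rfl | h
    · exfalso
      rw [norm_zero, Real.zero_rpow (by linarith)] at ha
      exact absurd (lt_of_lt_of_le ht ha) (lt_irrefl 0)
    · have hn : 0 < ‖a‖ := norm_pos_iff.2 h
      rw [mem_closedBall_zero_iff]
      exact (Real.le_rpow_inv_iff_of_neg hn ht (by linarith)).mpr ha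
  calc ∫⁻ t in Ioi (0:ℝ), (volume.restrict (ball (0:E3) 1)) {a | t ≤ ‖a‖ ^ (-α)}
      ≤ ∫⁻ t in Ioc (0:ℝ) 1 ∪ Ioi 1, (volume.restrict (ball (0:E3) 1)) {a | t ≤ ‖a‖ ^ (-α)} :=
        lintegral_mono_set Ioi_subset_Ioc_union_Ioi
    _ ≤ (∫⁻ t in Ioc (0:ℝ) 1, (volume.restrict (ball (0:E3) 1)) {a | t ≤ ‖a‖ ^ (-α)})
        + ∫⁻ t in Ioi (1:ℝ), (volume.restrict (ball (0:E3) 1)) {a | t ≤ ‖a‖ ^ (-α)} :=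
        lintegral_union_le _ _ _
    _ < ⊤ := by
        apply ENNReal.add_lt_top.2
        constructor
        · calc (∫⁻ t in Ioc (0:ℝ) 1, (volume.restrict (ball (0:E3) 1)) {a | t ≤ ‖a‖ ^ (-α)})
              ≤ ∫⁻ _ in Ioc (0:ℝ) 1, volume (ball (0:E3) 1) := by
                apply setLIntegral_mono' measurableSet_Ioc
                intro t _
                calc (volume.restrict (ball (0:E3) 1)) {a | t ≤ ‖a‖ ^ (-α)}
                    ≤ (volume.restrict (ball (0:E3) 1)) univ := measure_mono (subset_univ _)
                  _ = volume (ball (0:E3) 1) := by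
                      rw [Measure.restrict_apply_univ]
            _ < ⊤ := by
                rw [lintegral_const, Measure.restrict_apply_univ]
                exact ENNReal.mul_lt_top measure_ball_lt_top (by simp)
        · have key : ∀ t ∈ Ioi (1:ℝ), (volume.restrict (ball (0:E3) 1)) {a | t ≤ ‖a‖ ^ (-α)}
              ≤ ENNReal.ofReal (t ^ (-(3/α))) * volume (ball (0:E3) 1) := by
            intro t ht
            have ht0 : (0:ℝ) < t := lt_trans zero_lt_one ht
            have hr0 : (0:ℝ) ≤ t ^ (-α)⁻¹ := Real.rpow_nonneg ht0.le _
            calc (volume.restrict (ball (0:E3) 1)) {a | t ≤ ‖a‖ ^ (-α)}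
                ≤ volume (closedBall (0:E3) (t ^ (-α)⁻¹)) := by
                  refine le_trans (Measure.restrict_le_self _) ?_
                  exact measure_mono (hsub t (mem_Ioi.2 ht0))
              _ = ENNReal.ofReal ((t ^ (-α)⁻¹) ^ Module.finrank ℝ E3) * volume (ball (0:E3) 1) :=
                  Measure.addHaar_closedBall _ _ hr0
              _ = ENNReal.ofReal (t ^ (-(3/α))) * volume (ball (0:E3) 1) := by
                  congr 1
                  rw [finrank_euclideanSpace_fin]
                  rw [← Real.rpow_natCast (t ^ (-α)⁻¹) 3, ← Real.rpow_mul ht0.le]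
                  norm_num
                  ring_nf
          calc ∫⁻ t in Ioi (1:ℝ), (volume.restrict (ball (0:E3) 1)) {a | t ≤ ‖a‖ ^ (-α)}
              ≤ ∫⁻ t in Ioi (1:ℝ), ENNReal.ofReal (t ^ (-(3/α))) * volume (ball (0:E3) 1) :=
                setLIntegral_mono' measurableSet_Ioi key
            _ = (∫⁻ t in Ioi (1:ℝ), ENNReal.ofReal (t ^ (-(3/α)))) * volume (ball (0:E3) 1) :=
                lintegral_mul_const' _ _ measure_ball_lt_top.ne
            _ < ⊤ := by
                apply ENNReal.mul_lt_top _ measure_ball_lt_top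
                apply IntegrableOn.setLIntegral_lt_top
                apply integrableOn_Ioi_rpow_of_lt _ zero_lt_one
                rw [neg_lt_neg_iff]
                rw [lt_div_iff₀ h0]
                linarith

lemma trans_ball (v : E3) (α : ℝ) :
    ∫⁻ u : E3 in ball v 1, ENNReal.ofReal (‖v - u‖ ^ (-α)) =
    ∫⁻ x : E3 in ball (0:E3) 1, ENNReal.ofReal (‖x‖ ^ (-α)) := by
  have hmem : ∀ u : E3, v - u ∈ ball (0:E3) 1 ↔ u ∈ ball v 1 := by
    intro u
    rw [mem_ball_zero_iff, mem_ball, dist_comm, dist_eq_norm]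
  have h1 : ∀ u : E3,
      (ball (0:E3) 1).indicator (fun x => ENNReal.ofReal (‖x‖ ^ (-α))) (v - u)
      = (ball v 1).indicator (fun u => ENNReal.ofReal (‖v - u‖ ^ (-α))) u := by
    intro u
    by_cases h : u ∈ ball v 1
    · rw [indicator_of_mem h, indicator_of_mem ((hmem u).2 h)]
    · rw [indicator_of_notMem h, indicator_of_notMem (fun hc => h ((hmem u).1 hc))]
  rw [← lintegral_indicator measurableSet_ball, ← lintegral_indicator measurableSet_ball]
  calc ∫⁻ u, (ball v 1).indicator (fun u => ENNReal.ofReal (‖v - u‖ ^ (-α))) u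
      = ∫⁻ u, (ball (0:E3) 1).indicator (fun x => ENNReal.ofReal (‖x‖ ^ (-α))) (v - u) :=
        lintegral_congr fun u => (h1 u).symm
    _ = ∫⁻ x, (ball (0:E3) 1).indicator (fun x => ENNReal.ofReal (‖x‖ ^ (-α))) x :=
        (Measure.measurePreserving_sub_left volume v).lintegral_comp_emb
          (MeasurableEquiv.subLeft v).measurableEmbedding _

lemma aux_div {a b c : ℝ} (ha : 0 < a) (hb : 0 < b) (h : a ≤ c * b) : b⁻¹ ≤ c * a⁻¹ := by
  have h1 : a * a⁻¹ = 1 := mul_inv_cancel₀ ha.ne'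
  have h2 : b * b⁻¹ = 1 := mul_inv_cancel₀ hb.ne'
  have h3 : 0 < a⁻¹ := inv_pos.2 ha
  have h4 : 0 < b⁻¹ := inv_pos.2 hb
  nlinarith [mul_le_mul_of_nonneg_right h (le_of_lt (mul_pos h3 h4))]

lemma rpow_le_sq {α Q : ℝ} (hQ : 1 ≤ Q) (hα0 : 0 ≤ α) (hα4 : α ≤ 4) : Q ^ (α/2) ≤ Q ^ 2 := by
  have h : Q ^ (α/2) ≤ Q ^ (2:ℝ) := Real.rpow_le_rpow_of_exponent_le hQ (by linarith)
  rwa [show (2:ℝ) = ((2:ℕ):ℝ) by norm_num, Real.rpow_natCast] at h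

lemma regionA {α : ℝ} (hα0 : 0 ≤ α) (hα4 : α ≤ 4) (v u : E3) (hu : u ∈ ball v 1) :
    Real.exp (-‖u‖^2) ≤ 48 * (1 + ‖v‖^2) ^ (-α/2) := by
  set t := ‖v‖ with ht
  set m := max (t - 1) 0 with hm
  have htn : 0 ≤ t := norm_nonneg v
  have hQ1 : (1:ℝ) ≤ 1 + t^2 := by nlinarith
  have hQ0 : (0:ℝ) < 1 + t^2 := by linarith
  have hum : m ≤ ‖u‖ := by
    have hd : dist u v < 1 := mem_ball.1 hu
    have h1 : ‖v‖ - ‖u‖ ≤ ‖v - u‖ := norm_sub_norm_le v u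
    have h2 : ‖v - u‖ = dist u v := by rw [dist_eq_norm, norm_sub_rev]
    apply max_le (by linarith) (norm_nonneg u)
  have hm0 : 0 ≤ m := le_max_right _ _
  have e1 : Real.exp (-‖u‖^2) ≤ Real.exp (-(m^2)) := by
    apply Real.exp_le_exp.2
    nlinarith
  have h48 : (1 + t^2)^(α/2) ≤ 48 * Real.exp (m^2) := by
    refine le_trans (rpow_le_sq hQ1 hα0 hα4) ?_
    by_cases h : t ≤ 2
    · have he : (1:ℝ) ≤ Real.exp (m^2) := Real.one_le_exp (by positivity)
      have h4 : t^2 ≤ 4 := by nlinarith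
      have h5 : 1 + t^2 ≤ 5 := by linarith
      nlinarith
    · push_neg at h
      have hmt : m = t - 1 := max_eq_left (by linarith)
      have key := aux_exp2 (x := t^2) (by positivity)
      have h2 : Real.exp (t^2/4) ≤ Real.exp (m^2) := by
        apply Real.exp_le_exp.2
        rw [hmt]; nlinarith
      linarith
  have := aux_div (Real.rpow_pos_of_pos hQ0 (α/2)) (Real.exp_pos (m^2)) h48
  calc Real.exp (-‖u‖^2) ≤ Real.exp (-(m^2)) := e1
    _ = (Real.exp (m^2))⁻¹ := Real.exp_neg _
    _ ≤ 48 * ((1 + t^2)^(α/2))⁻¹ := this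
    _ = 48 * (1 + t^2) ^ (-α/2) := by rw [neg_div, Real.rpow_neg hQ0.le]

lemma regionB {α : ℝ} (hα0 : 0 ≤ α) (v u : E3) (h1 : 1 ≤ ‖v - u‖) (h2 : ‖u‖ ≤ ‖v‖/2) :
    ‖v - u‖ ^ (-α) ≤ 4 ^ α * (1 + ‖v‖^2) ^ (-α/2) := by
  set t := ‖v‖ with ht
  have htn : 0 ≤ t := norm_nonneg v
  have hQ0 : (0:ℝ) < 1 + t^2 := by nlinarith
  have hsq : Real.sqrt (1 + t^2) ^ 2 = 1 + t^2 := Real.sq_sqrt hQ0.le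
  have hs0 : 0 < Real.sqrt (1 + t^2) := Real.sqrt_pos.2 hQ0
  have hs : Real.sqrt (1 + t^2) / 4 ≤ ‖v - u‖ := by
    by_cases h : Real.sqrt (1 + t^2) ≤ 4
    · linarith
    · push_neg at h
      have h15 : 15 < t^2 := by nlinarith
      have hst : Real.sqrt (1 + t^2) ≤ 2 * t := by
        calc Real.sqrt (1 + t^2) ≤ Real.sqrt ((2*t)^2) := Real.sqrt_le_sqrt (by nlinarith)
          _ = 2 * t := Real.sqrt_sq (by positivity)
      have h3 : t - ‖u‖ ≤ ‖v - u‖ := by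
        have := norm_sub_norm_le v u
        linarith
      linarith
  calc ‖v - u‖ ^ (-α) ≤ (Real.sqrt (1 + t^2) / 4) ^ (-α) :=
        Real.rpow_le_rpow_of_nonpos (by positivity) hs (by linarith)
    _ = 4 ^ α * (1 + t^2) ^ (-α/2) := by
        rw [Real.div_rpow (Real.sqrt_nonneg _) (by norm_num : (0:ℝ) ≤ 4),
          Real.rpow_neg (by norm_num : (0:ℝ) ≤ 4), div_eq_mul_inv, inv_inv,
          ← Real.rpow_div_two_eq_sqrt _ hQ0.le, neg_div, mul_comm]

lemma regionC {α : ℝ} (hα0 : 0 ≤ α) (hα4 : α ≤ 4) (v : E3) :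
    Real.exp (-(‖v‖^2/8)) ≤ 192 * (1 + ‖v‖^2) ^ (-α/2) := by
  set t := ‖v‖ with ht
  have htn : 0 ≤ t := norm_nonneg v
  have hQ1 : (1:ℝ) ≤ 1 + t^2 := by nlinarith
  have hQ0 : (0:ℝ) < 1 + t^2 := by linarith
  have h192 : (1 + t^2)^(α/2) ≤ 192 * Real.exp (t^2/8) := by
    refine le_trans (rpow_le_sq hQ1 hα0 hα4) ?_
    have := aux_exp1 (x := t^2) (by positivity)
    linarith
  have := aux_div (Real.rpow_pos_of_pos hQ0 (α/2)) (Real.exp_pos (t^2/8)) h192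
  calc Real.exp (-(t^2/8)) = (Real.exp (t^2/8))⁻¹ := Real.exp_neg _
    _ ≤ 192 * ((1 + t^2)^(α/2))⁻¹ := this
    _ = 192 * (1 + t^2) ^ (-α/2) := by rw [neg_div, Real.rpow_neg hQ0.le]

theorem stmt11 (α : ℝ) (hα0 : 0 ≤ α) (hα3 : α < 3) :
    ∃ C : ℝ, 0 < C ∧ ∀ v : EuclideanSpace ℝ (Fin 3),
      ∫ u : EuclideanSpace ℝ (Fin 3), ‖v - u‖ ^ (-α) * Real.exp (-‖u‖ ^ 2) ≤
        C * (1 + ‖v‖ ^ 2) ^ (-α / 2) := by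
  rcases eq_or_lt_of_le hα0 with h0 | h0
  · -- α = 0
    subst h0
    have hi : 0 ≤ ∫ u : E3, Real.exp (-‖u‖^2) :=
      integral_nonneg fun u => Real.exp_nonneg _
    refine ⟨(∫ u : E3, Real.exp (-‖u‖^2)) + 1, by linarith, fun v => ?_⟩
    simp only [neg_zero, Real.rpow_zero, one_mul, zero_div, mul_one]
    linarith
  have hα4 : α ≤ 4 := by linarith
  set KK := ∫⁻ x : E3 in ball 0 1, ENNReal.ofReal (‖x‖ ^ (-α)) with hKKdef
  have hK : KK < ⊤ := K_lt_top h0 hα3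
  set GG := ∫⁻ u : E3, ENNReal.ofReal (Real.exp (-‖u‖^2)) with hGGdef
  have hG : GG < ⊤ := by
    have := gauss_lt_top 1 one_pos
    simpa using this
  set GG2 := ∫⁻ u : E3, ENNReal.ofReal (Real.exp (-(2⁻¹ * ‖u‖^2))) with hGG2def
  have hG2 : GG2 < ⊤ := gauss_lt_top 2⁻¹ (by norm_num)
  set Ct : ENNReal := 48 * KK + ENNReal.ofReal (4^α) * GG + 192 * GG2 with hCtdef
  have hCt : Ct ≠ ⊤ := by
    refine ENNReal.add_ne_top.2 ⟨ENNReal.add_ne_top.2 ⟨?_, ?_⟩, ?_⟩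
    · exact ENNReal.mul_ne_top (by simp) hK.ne
    · exact ENNReal.mul_ne_top ENNReal.ofReal_ne_top hG.ne
    · exact ENNReal.mul_ne_top (by simp) hG2.ne
  refine ⟨Ct.toReal + 1, by positivity, fun v => ?_⟩
  set Q : ℝ := 1 + ‖v‖^2 with hQdef
  have hQ0 : (0:ℝ) < Q := by positivity
  have hQnn : 0 ≤ Q ^ (-α/2) := Real.rpow_nonneg hQ0.le _
  set Q' : ENNReal := ENNReal.ofReal (Q ^ (-α/2)) with hQ'def
  have hmeas : AEStronglyMeasurable
      (fun u : E3 => ‖v - u‖ ^ (-α) * Real.exp (-‖u‖^2)) volume := by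
    apply Measurable.aestronglyMeasurable
    fun_prop
  have hnn : 0 ≤ᵐ[volume] fun u : E3 => ‖v - u‖ ^ (-α) * Real.exp (-‖u‖^2) :=
    Filter.Eventually.of_forall fun u => by positivity
  rw [integral_eq_lintegral_of_nonneg_ae hnn hmeas]
  set f : E3 → ℝ≥0∞ := fun u => ENNReal.ofReal (‖v - u‖ ^ (-α) * Real.exp (-‖u‖^2))
    with hfdef
  -- piece A
  have pA : ∫⁻ u in ball v 1, f u ≤ (48 * KK) * Q' := by
    have step : ∫⁻ u in ball v 1, f u ≤
        ∫⁻ u in ball v 1, ENNReal.ofReal (48 * Q ^ (-α/2)) *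
          ENNReal.ofReal (‖v - u‖ ^ (-α)) := by
      apply setLIntegral_mono' measurableSet_ball
      intro u hu
      rw [hfdef]
      simp only
      rw [ENNReal.ofReal_mul (Real.rpow_nonneg (norm_nonneg _) _), mul_comm]
      exact mul_le_mul_left (ENNReal.ofReal_le_ofReal (regionA hα0 hα4 v u hu)) _
    rw [lintegral_const_mul' _ _ ENNReal.ofReal_ne_top, trans_ball v α] at step
    calc ∫⁻ u in ball v 1, f u ≤ ENNReal.ofReal (48 * Q ^ (-α/2)) * KK := step
      _ = (48 * KK) * Q' := by
          rw [ENNReal.ofReal_mul (by norm_num : (0:ℝ) ≤ 48), ENNReal.ofReal_ofNat]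
          ring
  -- piece B
  have pB : ∫⁻ u in (ball v 1)ᶜ ∩ closedBall 0 (‖v‖/2), f u ≤
      (ENNReal.ofReal (4^α) * GG) * Q' := by
    have step : ∫⁻ u in (ball v 1)ᶜ ∩ closedBall 0 (‖v‖/2), f u ≤
        ∫⁻ u in (ball v 1)ᶜ ∩ closedBall 0 (‖v‖/2),
          ENNReal.ofReal (4^α * Q ^ (-α/2)) * ENNReal.ofReal (Real.exp (-‖u‖^2)) := by
      apply setLIntegral_mono' (measurableSet_ball.compl.inter measurableSet_closedBall)
      rintro u ⟨hu1, hu2⟩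
      have h1 : 1 ≤ ‖v - u‖ := by
        have : ¬ dist u v < 1 := hu1
        rw [dist_eq_norm, norm_sub_rev] at this
        linarith [not_lt.1 this]
      have h2 : ‖u‖ ≤ ‖v‖/2 := mem_closedBall_zero_iff.1 hu2
      rw [hfdef]
      simp only
      rw [ENNReal.ofReal_mul (Real.rpow_nonneg (norm_nonneg _) _)]
      exact mul_le_mul_left (ENNReal.ofReal_le_ofReal (regionB hα0 v u h1 h2)) _
    rw [lintegral_const_mul' _ _ ENNReal.ofReal_ne_top] at step
    calc ∫⁻ u in (ball v 1)ᶜ ∩ closedBall 0 (‖v‖/2), f u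
        ≤ ENNReal.ofReal (4^α * Q ^ (-α/2)) *
          ∫⁻ u in (ball v 1)ᶜ ∩ closedBall 0 (‖v‖/2),
            ENNReal.ofReal (Real.exp (-‖u‖^2)) := step
      _ ≤ ENNReal.ofReal (4^α * Q ^ (-α/2)) * GG :=
          mul_le_mul_right (setLIntegral_le_lintegral _ _) _
      _ = (ENNReal.ofReal (4^α) * GG) * Q' := by
          rw [ENNReal.ofReal_mul (Real.rpow_nonneg (by norm_num) _)]
          ring
  -- piece C
  have pC : ∫⁻ u in (ball v 1)ᶜ ∩ (closedBall 0 (‖v‖/2))ᶜ, f u ≤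
      (192 * GG2) * Q' := by
    have step : ∫⁻ u in (ball v 1)ᶜ ∩ (closedBall 0 (‖v‖/2))ᶜ, f u ≤
        ∫⁻ u in (ball v 1)ᶜ ∩ (closedBall 0 (‖v‖/2))ᶜ,
          ENNReal.ofReal (192 * Q ^ (-α/2)) *
            ENNReal.ofReal (Real.exp (-(2⁻¹ * ‖u‖^2))) := by
      apply setLIntegral_mono' (measurableSet_ball.compl.inter measurableSet_closedBall.compl)
      rintro u ⟨hu1, hu2⟩
      have h1 : 1 ≤ ‖v - u‖ := by
        have : ¬ dist u v < 1 := hu1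
        rw [dist_eq_norm, norm_sub_rev] at this
        linarith [not_lt.1 this]
      have h2 : ‖v‖/2 < ‖u‖ := by
        have : ¬ ‖u‖ ≤ ‖v‖/2 := fun hc => hu2 (mem_closedBall_zero_iff.2 hc)
        linarith [not_le.1 this]
      have hr1 : ‖v - u‖ ^ (-α) ≤ 1 :=
        Real.rpow_le_one_of_one_le_of_nonpos h1 (by linarith)
      have hexp : Real.exp (-‖u‖^2) ≤
          Real.exp (-(‖v‖^2/8)) * Real.exp (-(2⁻¹ * ‖u‖^2)) := by
        rw [← Real.exp_add]
        apply Real.exp_le_exp.2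
        nlinarith [norm_nonneg u, norm_nonneg v]
      have hreal : ‖v - u‖ ^ (-α) * Real.exp (-‖u‖^2) ≤
          (192 * Q ^ (-α/2)) * Real.exp (-(2⁻¹ * ‖u‖^2)) := by
        have s1 : ‖v - u‖ ^ (-α) * Real.exp (-‖u‖^2) ≤ Real.exp (-‖u‖^2) := by
          calc ‖v - u‖ ^ (-α) * Real.exp (-‖u‖^2) ≤ 1 * Real.exp (-‖u‖^2) :=
                mul_le_mul_of_nonneg_right hr1 (Real.exp_nonneg _)
            _ = Real.exp (-‖u‖^2) := one_mul _
        have s2 := regionC (α := α) hα0 hα4 v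
        calc ‖v - u‖ ^ (-α) * Real.exp (-‖u‖^2)
            ≤ Real.exp (-(‖v‖^2/8)) * Real.exp (-(2⁻¹ * ‖u‖^2)) := le_trans s1 hexp
          _ ≤ (192 * Q ^ (-α/2)) * Real.exp (-(2⁻¹ * ‖u‖^2)) :=
              mul_le_mul_of_nonneg_right s2 (Real.exp_nonneg _)
      rw [hfdef]
      simp only
      calc ENNReal.ofReal (‖v - u‖ ^ (-α) * Real.exp (-‖u‖^2))
          ≤ ENNReal.ofReal ((192 * Q ^ (-α/2)) * Real.exp (-(2⁻¹ * ‖u‖^2))) :=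
            ENNReal.ofReal_le_ofReal hreal
        _ = ENNReal.ofReal (192 * Q ^ (-α/2)) *
            ENNReal.ofReal (Real.exp (-(2⁻¹ * ‖u‖^2))) :=
            ENNReal.ofReal_mul (by positivity)
    rw [lintegral_const_mul' _ _ ENNReal.ofReal_ne_top] at step
    calc ∫⁻ u in (ball v 1)ᶜ ∩ (closedBall 0 (‖v‖/2))ᶜ, f u
        ≤ ENNReal.ofReal (192 * Q ^ (-α/2)) *
          ∫⁻ u in (ball v 1)ᶜ ∩ (closedBall 0 (‖v‖/2))ᶜ,
            ENNReal.ofReal (Real.exp (-(2⁻¹ * ‖u‖^2))) := step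
      _ ≤ ENNReal.ofReal (192 * Q ^ (-α/2)) * GG2 :=
          mul_le_mul_right (setLIntegral_le_lintegral _ _) _
      _ = (192 * GG2) * Q' := by
          rw [ENNReal.ofReal_mul (by norm_num : (0:ℝ) ≤ 192), ENNReal.ofReal_ofNat]
          ring
  -- assemble
  have hcompl : ∫⁻ u in (ball v 1)ᶜ, f u ≤
      (∫⁻ u in (ball v 1)ᶜ ∩ closedBall 0 (‖v‖/2), f u) +
      ∫⁻ u in (ball v 1)ᶜ ∩ (closedBall 0 (‖v‖/2))ᶜ, f u := by
    calc ∫⁻ u in (ball v 1)ᶜ, f u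
        = ∫⁻ u in ((ball v 1)ᶜ ∩ closedBall 0 (‖v‖/2)) ∪
            ((ball v 1)ᶜ ∩ (closedBall 0 (‖v‖/2))ᶜ), f u := by
          rw [inter_union_compl]
      _ ≤ _ := lintegral_union_le _ _ _
  have key : ∫⁻ u : E3, f u ≤ Ct * Q' := by
    calc ∫⁻ u : E3, f u
        = (∫⁻ u in ball v 1, f u) + ∫⁻ u in (ball v 1)ᶜ, f u :=
          (lintegral_add_compl f measurableSet_ball).symm
      _ ≤ (48 * KK) * Q' + ((ENNReal.ofReal (4^α) * GG) * Q' + (192 * GG2) * Q') :=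
          add_le_add pA (le_trans hcompl (add_le_add pB pC))
      _ = Ct * Q' := by rw [hCtdef]; ring
  have hfin : Ct * Q' ≠ ⊤ := ENNReal.mul_ne_top hCt ENNReal.ofReal_ne_top
  calc (∫⁻ u : E3, f u).toReal ≤ (Ct * Q').toReal := ENNReal.toReal_mono hfin key
    _ = Ct.toReal * Q ^ (-α/2) := by
        rw [ENNReal.toReal_mul, hQ'def, ENNReal.toReal_ofReal hQnn]
    _ ≤ (Ct.toReal + 1) * Q ^ (-α/2) := by
        apply mul_le_mul_of_nonneg_right _ hQnn
        linarith
end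
end

section
/- Let R ≥ 1, v, u ∈ ℝ³ and define v⁰, u⁰, g, s, n, n⁰ as in the context, and let v', u' (and v'⁰, u'⁰) be the post-collisional momenta in the first representation with unit vector ω ∈ ℝ³. If ω lies in the cutoff set, i.e. |v − u|²|n×ω|²/(2R²s) ≤ B for a constant B > 0, then |v|² + |u|² − |v'|² − |u'|² ≤ B. -/
open Real

noncomputable section

/-- interpret a coordinate function as a vector of `ℝ³` with the Euclidean norm -/
def toE3 (f : Fin 3 → ℝ) : EuclideanSpace ℝ (Fin 3) :=
  (WithLp.equiv 2 (Fin 3 → ℝ)).symm f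

/-- the cross product on `ℝ³` -/
def cross (a b : EuclideanSpace ℝ (Fin 3)) : EuclideanSpace ℝ (Fin 3) :=
  toE3 ![a 1 * b 2 - a 2 * b 1, a 2 * b 0 - a 0 * b 2, a 0 * b 1 - a 1 * b 0]

/-- post-collisional momentum `v'` in the first representation -/
def vprime (R : ℝ) (v u ω : EuclideanSpace ℝ (Fin 3)) : EuclideanSpace ℝ (Fin 3) :=
  toE3 fun k =>
    (v k + u k) / 2 +
      R * gRel R v u / 2 * ((v0 R v + v0 R u) * ω k) /
        Real.sqrt ((v0 R v + v0 R u) ^ 2 - R⁻¹ ^ 2 * (inner ℝ (v + u) ω : ℝ) ^ 2)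

lemma norm_sq_E3 (a : EuclideanSpace ℝ (Fin 3)) : ‖a‖ ^ 2 = ∑ i, a i ^ 2 := by
  rw [EuclideanSpace.norm_eq, Real.sq_sqrt (by positivity)]
  simp [sq_abs]

lemma inner_E3 (a b : EuclideanSpace ℝ (Fin 3)) : (inner ℝ a b : ℝ) = ∑ i, a i * b i := by
  simp [PiLp.inner_apply, RCLike.inner_apply, mul_comm]

lemma cross_lagrange (a b : EuclideanSpace ℝ (Fin 3)) :
    ‖cross a b‖ ^ 2 = ‖a‖ ^ 2 * ‖b‖ ^ 2 - (inner ℝ a b : ℝ) ^ 2 := by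
  rw [norm_sq_E3, norm_sq_E3, norm_sq_E3, inner_E3]
  simp [cross, toE3, Fin.sum_univ_three]
  ring

lemma v0_sq (R : ℝ) (v : EuclideanSpace ℝ (Fin 3)) :
    v0 R v ^ 2 = 1 + R⁻¹ ^ 2 * ‖v‖ ^ 2 := Real.sq_sqrt (by positivity)

lemma g_rad_nonneg (R : ℝ) (hR : 1 ≤ R) (v u : EuclideanSpace ℝ (Fin 3)) :
    0 ≤ 2 * v0 R v * v0 R u - 2 - 2 * R⁻¹ ^ 2 * (inner ℝ v u : ℝ) := by
  have hR0 : (0:ℝ) < R := lt_of_lt_of_le one_pos hR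
  set p := R⁻¹ * ‖v‖ with hp
  set q := R⁻¹ * ‖u‖ with hq
  have hp0 : 0 ≤ p := by positivity
  have hq0 : 0 ≤ q := by positivity
  have h1 : v0 R v * v0 R u = Real.sqrt ((1 + p ^ 2) * (1 + q ^ 2)) := by
    rw [v0, v0, ← Real.sqrt_mul (by positivity), hp, hq]; ring_nf
  have h2 : 1 + p * q ≤ Real.sqrt ((1 + p ^ 2) * (1 + q ^ 2)) := by
    have h := Real.sqrt_le_sqrt
      (show (1 + p * q) ^ 2 ≤ (1 + p ^ 2) * (1 + q ^ 2) by nlinarith [sq_nonneg (p - q)])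
    rwa [Real.sqrt_sq (by positivity)] at h
  have h3 : (inner ℝ v u : ℝ) ≤ ‖v‖ * ‖u‖ := real_inner_le_norm v u
  have h4 : R⁻¹ ^ 2 * (inner ℝ v u : ℝ) ≤ p * q := by
    have h5 : (0:ℝ) ≤ R⁻¹ ^ 2 := by positivity
    have h6 : p * q = R⁻¹ ^ 2 * (‖v‖ * ‖u‖) := by rw [hp, hq]; ring
    nlinarith
  nlinarith [h1, h2]

lemma g_sq (R : ℝ) (hR : 1 ≤ R) (v u : EuclideanSpace ℝ (Fin 3)) :
    gRel R v u ^ 2 = 2 * v0 R v * v0 R u - 2 - 2 * R⁻¹ ^ 2 * (inner ℝ v u : ℝ) :=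
  Real.sq_sqrt (g_rad_nonneg R hR v u)

/-- scalar key inequality `s·|v−u|² ≤ R²g²(v⁰+u⁰)²` -/
lemma key_scalar (V U G t A N r2 R2 I P Q s : ℝ)
    (hVsq : V ^ 2 = 1 + r2 * P) (hUsq : U ^ 2 = 1 + r2 * Q)
    (hg2 : G ^ 2 = 2 * V * U - 2 - 2 * r2 * I)
    (hA : A = P - 2 * I + Q) (hN : N = P + 2 * I + Q)
    (ht : t = P - Q) (hs : s = (V + U) ^ 2 - r2 * N)
    (hr2R : r2 * R2 = 1) (hr2 : 0 ≤ r2) (hCS : t ^ 2 ≤ N * A) :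
    s * A ≤ R2 * G ^ 2 * (V + U) ^ 2 := by
  have hgid : R2 * G ^ 2 = A - R2 * (V - U) ^ 2 := by
    have e1 : R2 * V ^ 2 = R2 + P := by linear_combination R2 * hVsq + P * hr2R
    have e2 : R2 * U ^ 2 = R2 + Q := by linear_combination R2 * hUsq + Q * hr2R
    linear_combination R2 * hg2 - hA + e1 + e2 - 2 * I * hr2R
  have hvu : (V - U) * (V + U) = r2 * t := by
    linear_combination hVsq - hUsq - r2 * ht
  have e3 : R2 * ((V - U) * (V + U)) ^ 2 = r2 * t ^ 2 := by
    rw [hvu]; linear_combination (r2 * t ^ 2) * hr2R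
  have h5 : R2 * G ^ 2 * (V + U) ^ 2 - s * A = r2 * (N * A - t ^ 2) := by
    linear_combination (V + U) ^ 2 * hgid - A * hs - e3
  have h6 : 0 ≤ r2 * (N * A - t ^ 2) := mul_nonneg hr2 (by linarith)
  linarith

/-- scalar final chain of inequalities -/
lemma half_sq (num E : ℝ) (hE : 0 < E) :
    2 * (num / (2 * Real.sqrt E)) ^ 2 = num ^ 2 / (2 * E) := by
  have hEne : E ≠ 0 := ne_of_gt hE
  rw [div_pow, mul_pow, Real.sq_sqrt hE.le]
  field_simp

lemma energy_final (s D A C r2 R2 X B : ℝ) (hs4 : 4 ≤ s) (hA0 : 0 ≤ A) (hC0 : 0 ≤ C)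
    (hr2 : 0 < r2) (hR2 : 0 < R2) (hr2R : r2 * R2 = 1) (hD : D = s + r2 * C)
    (hkey : s * A ≤ X) (hcut : A * C / (2 * R2 * s) ≤ B) :
    A / 2 - X / (2 * D) ≤ B := by
  have hs0 : (0:ℝ) < s := by linarith
  have hrC : 0 ≤ r2 * C := mul_nonneg hr2.le hC0
  have hD0 : (0:ℝ) < D := by rw [hD]; linarith
  have hDne : D ≠ 0 := ne_of_gt hD0
  have hsne : s ≠ 0 := ne_of_gt hs0
  have hR2ne : R2 ≠ 0 := ne_of_gt hR2
  calc A / 2 - X / (2 * D) ≤ A / 2 - s * A / (2 * D) := by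
        have h := (div_le_div_iff_of_pos_right (by linarith : (0:ℝ) < 2 * D)).mpr hkey
        linarith
    _ = A * (r2 * C) / (2 * D) := by
        rw [hD]
        have h1 : s + r2 * C ≠ 0 := by linarith
        field_simp
        ring
    _ ≤ A * (r2 * C) / (2 * s) := by
        apply div_le_div_of_nonneg_left (mul_nonneg hA0 hrC) (by linarith) (by rw [hD]; linarith)
    _ = A * C / (2 * R2 * s) := by
        field_simp
        linear_combination A * C * hr2R
    _ ≤ B := hcut

theorem stmt12 (R : ℝ) (hR : 1 ≤ R) (v u ω : EuclideanSpace ℝ (Fin 3))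
    (hω : ‖ω‖ = 1) (B : ℝ) (hB : 0 < B)
    (hcut : ‖v - u‖ ^ 2 * ‖cross (v + u) ω‖ ^ 2 / (2 * R ^ 2 * sRel R v u) ≤ B) :
    ‖v‖ ^ 2 + ‖u‖ ^ 2 - ‖vprime R v u ω‖ ^ 2 - ‖v + u - vprime R v u ω‖ ^ 2 ≤ B := by
  have hR0 : (0:ℝ) < R := lt_of_lt_of_le one_pos hR
  have hRne : R ≠ 0 := ne_of_gt hR0
  have hr2R : R⁻¹ ^ 2 * R ^ 2 = 1 := by field_simp
  have hr2 : (0:ℝ) < R⁻¹ ^ 2 := by positivity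
  have hVsq := v0_sq R v
  have hUsq := v0_sq R u
  have hg2 := g_sq R hR v u
  have hN : ‖v + u‖ ^ 2 = ‖v‖ ^ 2 + 2 * (inner ℝ v u : ℝ) + ‖u‖ ^ 2 := norm_add_sq_real v u
  have hA : ‖v - u‖ ^ 2 = ‖v‖ ^ 2 - 2 * (inner ℝ v u : ℝ) + ‖u‖ ^ 2 := norm_sub_sq_real v u
  have ht : (inner ℝ (v + u) (v - u) : ℝ) = ‖v‖ ^ 2 - ‖u‖ ^ 2 := by
    rw [inner_sub_right, inner_add_left, inner_add_left, real_inner_self_eq_norm_sq,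
      real_inner_self_eq_norm_sq, real_inner_comm u v]
    ring
  have hs : sRel R v u = (v0 R v + v0 R u) ^ 2 - R⁻¹ ^ 2 * ‖v + u‖ ^ 2 := by
    rw [sRel]
    linear_combination hg2 - hVsq - hUsq + R⁻¹ ^ 2 * hN
  have hCS : (inner ℝ (v + u) (v - u) : ℝ) ^ 2 ≤ ‖v + u‖ ^ 2 * ‖v - u‖ ^ 2 := by
    have h := abs_real_inner_le_norm (v + u) (v - u)
    calc (inner ℝ (v + u) (v - u) : ℝ) ^ 2 = |(inner ℝ (v + u) (v - u) : ℝ)| ^ 2 := (sq_abs _).symm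
      _ ≤ (‖v + u‖ * ‖v - u‖) ^ 2 := pow_le_pow_left₀ (abs_nonneg _) h 2
      _ = ‖v + u‖ ^ 2 * ‖v - u‖ ^ 2 := by ring
  have hkey : sRel R v u * ‖v - u‖ ^ 2 ≤
      R ^ 2 * gRel R v u ^ 2 * (v0 R v + v0 R u) ^ 2 :=
    key_scalar (v0 R v) (v0 R u) (gRel R v u) (inner ℝ (v + u) (v - u)) (‖v - u‖ ^ 2)
      (‖v + u‖ ^ 2) (R⁻¹ ^ 2) (R ^ 2) (inner ℝ v u) (‖v‖ ^ 2) (‖u‖ ^ 2) (sRel R v u)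
      hVsq hUsq hg2 hA hN ht hs hr2R hr2.le hCS
  -- cutoff facts
  have hCid : ‖cross (v + u) ω‖ ^ 2 = ‖v + u‖ ^ 2 - (inner ℝ (v + u) ω : ℝ) ^ 2 := by
    rw [cross_lagrange, hω]; ring
  have hC0 : (0:ℝ) ≤ ‖cross (v + u) ω‖ ^ 2 := by positivity
  have hD : (v0 R v + v0 R u) ^ 2 - R⁻¹ ^ 2 * (inner ℝ (v + u) ω : ℝ) ^ 2
      = sRel R v u + R⁻¹ ^ 2 * ‖cross (v + u) ω‖ ^ 2 := by
    rw [hCid, hs]; ring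
  have hs4 : (4:ℝ) ≤ sRel R v u := by
    rw [sRel]; linarith [sq_nonneg (gRel R v u)]
  have hD0 : (0:ℝ) < (v0 R v + v0 R u) ^ 2 - R⁻¹ ^ 2 * (inner ℝ (v + u) ω : ℝ) ^ 2 := by
    rw [hD]
    have : (0:ℝ) ≤ R⁻¹ ^ 2 * ‖cross (v + u) ω‖ ^ 2 := mul_nonneg hr2.le hC0
    linarith
  have hsD : Real.sqrt ((v0 R v + v0 R u) ^ 2 - R⁻¹ ^ 2 * (inner ℝ (v + u) ω : ℝ) ^ 2) ^ 2
      = (v0 R v + v0 R u) ^ 2 - R⁻¹ ^ 2 * (inner ℝ (v + u) ω : ℝ) ^ 2 := Real.sq_sqrt hD0.le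
  have hsD0 : (0:ℝ) < Real.sqrt ((v0 R v + v0 R u) ^ 2 - R⁻¹ ^ 2 * (inner ℝ (v + u) ω : ℝ) ^ 2) :=
    Real.sqrt_pos.mpr hD0
  have hsDne := ne_of_gt hsD0
  -- rewrite `v'` as a vector combination
  have hvp : vprime R v u ω = (1/2 : ℝ) • (v + u) +
      (R * gRel R v u * (v0 R v + v0 R u) /
        (2 * Real.sqrt ((v0 R v + v0 R u) ^ 2 - R⁻¹ ^ 2 * (inner ℝ (v + u) ω : ℝ) ^ 2))) • ω := by
    ext k
    simp only [vprime, toE3, WithLp.equiv_symm_apply, PiLp.toLp_apply, PiLp.add_apply, PiLp.smul_apply,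
      smul_eq_mul]
    field_simp
  have hvp2 : v + u - vprime R v u ω = (1/2 : ℝ) • (v + u) -
      (R * gRel R v u * (v0 R v + v0 R u) /
        (2 * Real.sqrt ((v0 R v + v0 R u) ^ 2 - R⁻¹ ^ 2 * (inner ℝ (v + u) ω : ℝ) ^ 2))) • ω := by
    rw [hvp]; module
  have hnorms : ‖vprime R v u ω‖ ^ 2 + ‖v + u - vprime R v u ω‖ ^ 2
      = ‖v + u‖ ^ 2 / 2 +
        2 * (R * gRel R v u * (v0 R v + v0 R u) /
          (2 * Real.sqrt ((v0 R v + v0 R u) ^ 2 - R⁻¹ ^ 2 * (inner ℝ (v + u) ω : ℝ) ^ 2))) ^ 2 := by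
    rw [hvp2, hvp, norm_add_sq_real, norm_sub_sq_real, norm_smul, norm_smul, hω]
    simp only [Real.norm_eq_abs, mul_one, mul_pow, sq_abs]
    ring
  rw [half_sq _ _ hD0] at hnorms
  have hkey' : sRel R v u * ‖v - u‖ ^ 2 ≤ (R * gRel R v u * (v0 R v + v0 R u)) ^ 2 :=
    hkey.trans_eq (by ring)
  calc ‖v‖ ^ 2 + ‖u‖ ^ 2 - ‖vprime R v u ω‖ ^ 2 - ‖v + u - vprime R v u ω‖ ^ 2
      = ‖v - u‖ ^ 2 / 2 - (R * gRel R v u * (v0 R v + v0 R u)) ^ 2 /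
          (2 * ((v0 R v + v0 R u) ^ 2 - R⁻¹ ^ 2 * (inner ℝ (v + u) ω : ℝ) ^ 2)) := by
        linarith [hnorms, hN, hA]
    _ ≤ B :=
        energy_final (sRel R v u)
          ((v0 R v + v0 R u) ^ 2 - R⁻¹ ^ 2 * (inner ℝ (v + u) ω : ℝ) ^ 2)
          (‖v - u‖ ^ 2) (‖cross (v + u) ω‖ ^ 2) (R⁻¹ ^ 2) (R ^ 2)
          ((R * gRel R v u * (v0 R v + v0 R u)) ^ 2) B
          hs4 (by positivity) hC0 hr2 (by positivity) hr2R hD hkey' hcut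

end
end

section
/- Let R ≥ 1, v, u ∈ ℝ³ with v + u ≠ 0, define v⁰, u⁰, g, s, n, n⁰ as in the context, and let v', u' (and v'⁰, u'⁰) be the post-collisional momenta in the second representation with unit vector ω̂ ∈ ℝ³. If ω̂ lies in the cutoff set, i.e. |v − u|²|n×ω̂|²/(2R²s) ≤ B for a constant B > 0, then |v|² + |u|² − |v'|² − |u'|² ≤ B. -/
open Real

noncomputable section

/-- post-collisional momentum `v'` in the second representation -/
def vprimeS (R : ℝ) (v u ω : EuclideanSpace ℝ (Fin 3)) : EuclideanSpace ℝ (Fin 3) :=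
  toE3 fun k =>
    (v k + u k) / 2 +
      R * gRel R v u / 2 *
        (ω k - (inner ℝ (v + u) ω : ℝ) * (v + u) k / ‖v + u‖ ^ 2 +
          (v0 R v + v0 R u) / Real.sqrt (sRel R v u) *
            ((inner ℝ (v + u) ω : ℝ) * (v + u) k / ‖v + u‖ ^ 2))

lemma inner3 (x y : EuclideanSpace ℝ (Fin 3)) : (inner ℝ x y : ℝ) = x 0*y 0 + x 1*y 1 + x 2*y 2 := by
  simp [PiLp.inner_apply, Fin.sum_univ_three, RCLike.inner_apply]; ring
lemma norm3 (x : EuclideanSpace ℝ (Fin 3)) : ‖x‖^2 = x 0^2 + x 1^2 + x 2^2 := by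
  rw [← real_inner_self_eq_norm_sq, inner3]; ring
lemma toE3_apply (f : Fin 3 → ℝ) (k : Fin 3) : toE3 f k = f k := rfl
lemma cross_norm_sq (x y : EuclideanSpace ℝ (Fin 3)) :
    ‖cross x y‖^2 = ‖x‖^2*‖y‖^2 - (inner ℝ x y : ℝ)^2 := by
  rw [norm3, norm3, norm3, inner3]
  simp only [cross, toE3_apply, Matrix.cons_val_zero, Matrix.cons_val_one, Matrix.head_cons,
    Matrix.cons_val_two, Matrix.tail_cons]
  ring
lemma ns2 (n w : EuclideanSpace ℝ (Fin 3)) (x y : ℝ) :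
    ‖x • n + y • w‖^2 = x^2*‖n‖^2 + y^2*‖w‖^2 + 2*(x*y)*(inner ℝ n w : ℝ) := by
  rw [norm_add_sq_real, norm_smul, norm_smul, real_inner_smul_left, real_inner_smul_right]
  simp [mul_pow, sq_abs]; ring
lemma scalar (R M N d g2 s Δ : ℝ) (hR : 1 ≤ R) (hM : 0 ≤ M) (hΔ : 0 ≤ Δ)
    (hs : 4 ≤ s) (hd : d^2 ≤ N)
    (hkey : R^2*g2*s + g2*N = M*s + Δ) :
    M/2 - R^2*g2/2 - g2*d^2/(2*s) ≤ M*(N-d^2)/(2*R^2*s) := by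
  have hR0 : (0:ℝ) < R := by linarith
  have hs0 : (0:ℝ) < s := by linarith
  have hN0 : 0 ≤ N := le_trans (sq_nonneg d) hd
  rw [le_div_iff₀ (by positivity : (0:ℝ) < 2*R^2*s)]
  have lhs_eq : (M/2 - R^2*g2/2 - g2*d^2/(2*s)) * (2*R^2*s)
      = M*R^2*s - R^4*g2*s - R^2*g2*d^2 := by field_simp
  rw [lhs_eq]
  have hzero : R^4*g2*s + R^2*g2*N - M*s*R^2 - Δ*R^2 = 0 := by linear_combination R^2 * hkey
  rcases le_total (R^2*g2) M with h | h
  · nlinarith [mul_nonneg (sub_nonneg.2 hd) (sub_nonneg.2 h), mul_nonneg hΔ (sq_nonneg R)]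
  · have h1 : R^2*g2*N ≤ Δ*R^2 := by
      nlinarith [mul_nonneg (mul_nonneg hs0.le (sq_nonneg R)) (sub_nonneg.2 h)]
    nlinarith [mul_nonneg (sq_nonneg d) (sub_nonneg.2 h), mul_nonneg hM hN0,
      mul_nonneg hM (sq_nonneg d)]

set_option maxHeartbeats 1000000 in
theorem stmt13 (R : ℝ) (hR : 1 ≤ R) (v u ω : EuclideanSpace ℝ (Fin 3))
    (hn : v + u ≠ 0) (hω : ‖ω‖ = 1) (B : ℝ) (hB : 0 < B)
    (hcut : ‖v - u‖ ^ 2 * ‖cross (v + u) ω‖ ^ 2 / (2 * R ^ 2 * sRel R v u) ≤ B) :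
    ‖v‖ ^ 2 + ‖u‖ ^ 2 - ‖vprimeS R v u ω‖ ^ 2 - ‖v + u - vprimeS R v u ω‖ ^ 2 ≤ B := by
  have hR0 : (0:ℝ) < R := by linarith
  have hRne : R ≠ 0 := ne_of_gt hR0
  have hRr : R^2 * R⁻¹^2 = 1 := by field_simp
  set a : ℝ := ‖v‖^2 with ha
  set b : ℝ := ‖u‖^2 with hb
  set c : ℝ := (inner ℝ v u : ℝ) with hc
  set N : ℝ := ‖v + u‖^2 with hNdef
  set M : ℝ := ‖v - u‖^2 with hM
  set d : ℝ := (inner ℝ (v + u) ω : ℝ) with hd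
  set g : ℝ := gRel R v u with hg
  set s : ℝ := sRel R v u with hs
  set n0 : ℝ := v0 R v + v0 R u with hn0
  have hN0 : 0 < N := by rw [hNdef]; exact pow_pos (norm_pos_iff.mpr hn) 2
  have hNne : N ≠ 0 := ne_of_gt hN0
  have hF1 : N = a + 2*c + b := by rw [hNdef, ha, hb, hc, norm_add_sq_real]; try ring
  have hF2 : M = a - 2*c + b := by rw [hM, ha, hb, hc, norm_sub_sq_real]; try ring
  have hM0 : 0 ≤ M := by rw [hM]; positivity
  have hcs : c^2 ≤ a*b := by
    rw [ha, hb, hc]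
    have h := real_inner_mul_inner_self_le v u
    rw [real_inner_self_eq_norm_sq, real_inner_self_eq_norm_sq] at h
    nlinarith only [h]
  have hdN : d^2 ≤ N := by
    have h := real_inner_mul_inner_self_le (v+u) ω
    rw [real_inner_self_eq_norm_sq, real_inner_self_eq_norm_sq, hω] at h
    rw [hd, hNdef]; nlinarith only [h]
  -- v0 facts
  have hv0a : v0 R v ^ 2 = 1 + R⁻¹^2 * a := by
    rw [ha, v0]; exact Real.sq_sqrt (by positivity)
  have hv0b : v0 R u ^ 2 = 1 + R⁻¹^2 * b := by
    rw [hb, v0]; exact Real.sq_sqrt (by positivity)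
  have hv0an : 0 ≤ v0 R v := Real.sqrt_nonneg _
  have hv0bn : 0 ≤ v0 R u := Real.sqrt_nonneg _
  have hP2 : (v0 R v * v0 R u)^2 = (1 + R⁻¹^2*a) * (1 + R⁻¹^2*b) := by
    rw [mul_pow, hv0a, hv0b]
  have hPn : 0 ≤ v0 R v * v0 R u := mul_nonneg hv0an hv0bn
  have hr0 : (0:ℝ) ≤ R⁻¹^2 := by positivity
  -- radicand nonneg
  have hrad : 0 ≤ 2 * v0 R v * v0 R u - 2 - 2 * R⁻¹^2 * c := by
    have hM2 : (0:ℝ) ≤ a - 2*c + b := by linarith only [hM0, hF2]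
    have h1 : 1 + R⁻¹^2*c ≤ v0 R v * v0 R u := by
      rcases le_or_gt (1 + R⁻¹^2*c) 0 with h | h
      · linarith only [hPn, h]
      · have hsq2 : (1 + R⁻¹^2*c)^2 ≤ (v0 R v * v0 R u)^2 := by
          rw [hP2]
          nlinarith only [mul_nonneg hr0 hM2, mul_nonneg (mul_nonneg hr0 hr0) (sub_nonneg.2 hcs), h, hr0]
        nlinarith only [hsq2, h, hPn]
    linarith only [h1]
  have hg2 : g^2 = 2 * v0 R v * v0 R u - 2 - 2*R⁻¹^2*c := by
    rw [hg, gRel, ← hc]; exact Real.sq_sqrt hrad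
  have hseq : s = 4 + g^2 := by rw [hs, sRel, hg]
  have hs4 : 4 ≤ s := by nlinarith only [sq_nonneg g, hseq]
  have hs0 : (0:ℝ) < s := by linarith
  have hsne : s ≠ 0 := ne_of_gt hs0
  have hsq : Real.sqrt s ^ 2 = s := Real.sq_sqrt hs0.le
  have hsqne : Real.sqrt s ≠ 0 := by
    intro h0
    rw [← hsq, h0] at hs0; norm_num at hs0
  have hn0sq : n0^2 = s + N * R⁻¹^2 := by
    have e1 : n0^2 = v0 R v ^2 + 2*(v0 R v * v0 R u) + v0 R u ^2 := by rw [hn0]; ring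
    rw [e1, hv0a, hv0b, hseq, hg2, hF1]; ring
  have hΔ : (0:ℝ) ≤ 4*(a*b - c^2)*R⁻¹^2 := mul_nonneg (by nlinarith only [hcs]) hr0
  have hkey : R^2*(g^2)*s + (g^2)*N = M*s + 4*(a*b - c^2)*R⁻¹^2 := by
    rw [hseq, hg2, hF1, hF2]
    linear_combination (4*R^2) * hP2 +
      (4*a + 4*b + 4*a*b*R⁻¹^2 + 4*R⁻¹^2*c^2 - 8*(v0 R v * v0 R u)*c) * hRr
  -- decomposition of v'
  set L : ℝ := n0 / Real.sqrt s with hL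
  set κ : ℝ := R * g / 2 with hκ
  set α : ℝ := 1/2 + κ * (L - 1) * d / N with hα
  have hv' : vprimeS R v u ω = α • (v + u) + κ • ω := by
    ext k
    simp only [vprimeS, toE3_apply, PiLp.add_apply, PiLp.smul_apply, smul_eq_mul]
    rw [← hg, ← hd, ← hNdef, ← hn0, ← hs, hα, hκ, hL]
    ring
  have hu' : v + u - vprimeS R v u ω = (1 - α) • (v + u) + (-κ) • ω := by
    rw [hv']; module
  have h1 : ‖vprimeS R v u ω‖^2 = α^2*N + κ^2 + 2*(α*κ)*d := by
    rw [hv', ns2, hω, ← hNdef, ← hd]; ring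
  have h2 : ‖v + u - vprimeS R v u ω‖^2 = (1-α)^2*N + κ^2 + 2*((1-α)*(-κ))*d := by
    rw [hu', ns2, hω, ← hNdef, ← hd]; ring
  have hT : ‖vprimeS R v u ω‖^2 + ‖v + u - vprimeS R v u ω‖^2
      = N/2 + 2*κ^2 + 2*κ^2*d^2*(L^2-1)/N := by
    rw [h1, h2, hα]; field_simp; ring
  have hL2 : L^2 = 1 + N*R⁻¹^2/s := by
    rw [hL, div_pow, hsq, hn0sq]; field_simp
  have hstep3 : 2*κ^2*d^2*(L^2-1)/N = g^2*d^2/(2*s) := by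
    rw [hL2, hκ]; field_simp; ring
  have hTfin : ‖vprimeS R v u ω‖^2 + ‖v + u - vprimeS R v u ω‖^2
      = N/2 + R^2*g^2/2 + g^2*d^2/(2*s) := by
    rw [hT, hstep3, hκ]; ring
  -- cutoff
  have hcr : ‖cross (v+u) ω‖^2 = N - d^2 := by
    rw [cross_norm_sq, hω, ← hNdef, ← hd]; ring
  rw [hcr] at hcut
  have hscal := scalar R M N d (g^2) s (4*(a*b - c^2)*R⁻¹^2) hR hM0 hΔ hs4 hdN hkey
  have hab : a + b = (N + M)/2 := by linarith only [hF1, hF2]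
  linarith only [hTfin, hscal, hcut, hab]


end
end

section
/- For each β with 0 ≤ β < 4 there exists a constant C > 0 depending only on β such that for all R ≥ 1 and all v ∈ ℝ³: ∫_{ℝ³} v_φ g^{−β} e^{−|u|²} du ≤ C if 0 ≤ β ≤ 1, and ∫_{ℝ³} v_φ g^{−β} e^{−|u|²} du ≤ C·R^{β−1} if 1 ≤ β < 4, where v_φ = g√s/(v⁰u⁰). -/
open Real MeasureTheory

set_option maxHeartbeats 1000000
noncomputable section

/-- the Møller velocity `v_φ = g√s/(v⁰u⁰)` -/
def vphi (R : ℝ) (v u : EuclideanSpace ℝ (Fin 3)) : ℝ :=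
  gRel R v u * Real.sqrt (sRel R v u) / (v0 R v * v0 R u)

namespace Stmt14Aux


local notation "E3" => EuclideanSpace ℝ (Fin 3)

lemma v0_sq (R : ℝ) (v : E3) : v0 R v ^ 2 = 1 + R⁻¹ ^ 2 * ‖v‖ ^ 2 :=
  Real.sq_sqrt (by positivity)

lemma v0_one_le (R : ℝ) (v : E3) : 1 ≤ v0 R v :=
  Real.one_le_sqrt.mpr (le_add_of_nonneg_right (by positivity))

lemma v0_pos (R : ℝ) (v : E3) : 0 < v0 R v := lt_of_lt_of_le one_pos (v0_one_le R v)

lemma rinv_mul_norm_le (R : ℝ) (hR : 1 ≤ R) (v : E3) : R⁻¹ * ‖v‖ ≤ v0 R v := by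
  have h0 : 0 ≤ R⁻¹ * ‖v‖ := by positivity
  have h : (R⁻¹ * ‖v‖) ^ 2 ≤ v0 R v ^ 2 := by rw [v0_sq]; nlinarith
  nlinarith [v0_pos R v]

lemma hX_nonneg (R : ℝ) (hR : 1 ≤ R) (v u : E3) :
    0 ≤ 2 * v0 R v * v0 R u - 2 - 2 * R⁻¹ ^ 2 * (inner ℝ v u : ℝ) := by
  have ha := v0_sq R v
  have hb := v0_sq R u
  have ha1 := v0_one_le R v
  have hb1 := v0_one_le R u
  have hcs : |(inner ℝ v u : ℝ)| ≤ ‖v‖ * ‖u‖ := abs_real_inner_le_norm v u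
  have habs := abs_le.mp hcs
  have hkey : 1 + R⁻¹ ^ 2 * (‖v‖ * ‖u‖) ≤ v0 R v * v0 R u := by
    have h2 : (1 + R⁻¹ ^ 2 * (‖v‖ * ‖u‖)) ^ 2 ≤ (v0 R v * v0 R u) ^ 2 := by
      rw [mul_pow, ha, hb]
      nlinarith [mul_nonneg (sq_nonneg R⁻¹) (sq_nonneg (‖v‖ - ‖u‖)), sq_nonneg (R⁻¹^2*‖v‖*‖u‖)]
    nlinarith [mul_pos (v0_pos R v) (v0_pos R u), mul_nonneg (sq_nonneg R⁻¹) (mul_nonneg (norm_nonneg v) (norm_nonneg u))]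
  nlinarith [mul_le_mul_of_nonneg_left habs.2 (sq_nonneg R⁻¹)]

lemma g_nonneg (R : ℝ) (v u : E3) : 0 ≤ gRel R v u := Real.sqrt_nonneg _

lemma g_sq (R : ℝ) (hR : 1 ≤ R) (v u : E3) :
    gRel R v u ^ 2 = 2 * v0 R v * v0 R u - 2 - 2 * R⁻¹ ^ 2 * (inner ℝ v u : ℝ) :=
  Real.sq_sqrt (hX_nonneg R hR v u)

lemma g_sq_le (R : ℝ) (hR : 1 ≤ R) (v u : E3) :
    gRel R v u ^ 2 ≤ 4 * (v0 R v * v0 R u) := by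
  rw [g_sq R hR v u]
  have hcs := abs_le.mp (abs_real_inner_le_norm v u)
  have h1 := rinv_mul_norm_le R hR v
  have h2 := rinv_mul_norm_le R hR u
  have h3 : R⁻¹ ^ 2 * (‖v‖ * ‖u‖) ≤ v0 R v * v0 R u := by
    have := mul_le_mul h1 h2 (by positivity) (v0_pos R v).le
    nlinarith
  nlinarith [mul_le_mul_of_nonneg_left hcs.1 (sq_nonneg R⁻¹), v0_one_le R v, v0_one_le R u]

lemma v0_le_of_g (R : ℝ) (hR : 1 ≤ R) (v u : E3) :
    v0 R v ≤ (gRel R v u ^ 2 + 2) * v0 R u := by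
  rw [g_sq R hR v u]
  have ha := v0_sq R v
  have hb := v0_sq R u
  have ha1 := v0_one_le R v
  have hb1 := v0_one_le R u
  have hcs := abs_le.mp (abs_real_inner_le_norm v u)
  have h1 : R⁻¹ ^ 2 * (inner ℝ v u : ℝ) ≤ (R⁻¹ * ‖v‖) * (R⁻¹ * ‖u‖) := by
    nlinarith [mul_le_mul_of_nonneg_left hcs.2 (sq_nonneg R⁻¹)]
  have h1b := mul_le_mul_of_nonneg_right h1 (by positivity : (0:ℝ) ≤ 2 * v0 R u)
  have e1 := rinv_mul_norm_le R hR v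
  have e2 : 2 * (R⁻¹ * ‖u‖) * v0 R u ≤ 1 + 2 * (R⁻¹ * ‖u‖) ^ 2 := by
    nlinarith [sq_nonneg (v0 R u - R⁻¹ * ‖u‖)]
  have h2 : (R⁻¹ * ‖v‖) * (R⁻¹ * ‖u‖) * (2 * v0 R u) ≤ v0 R v * (1 + 2 * (R⁻¹ * ‖u‖) ^ 2) := by
    have hq : 0 ≤ 2 * (R⁻¹ * ‖u‖) * v0 R u := by positivity
    nlinarith [mul_le_mul e1 e2 hq (v0_pos R v).le]
  nlinarith [h1b, h2, hb]

lemma key_low (R : ℝ) (hR : 1 ≤ R) (v u : E3) :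
    4 * R⁻¹ ^ 2 * ‖v - u‖ ^ 2 ≤
      (2 * v0 R v * v0 R u - 2 - 2 * R⁻¹ ^ 2 * (inner ℝ v u : ℝ)) * (v0 R v + v0 R u) ^ 2 := by
  have ha := v0_sq R v
  have hb := v0_sq R u
  have hX := hX_nonneg R hR v u
  have hd : ‖v - u‖ ^ 2 = ‖v‖ ^ 2 - 2 * (inner ℝ v u : ℝ) + ‖u‖ ^ 2 := norm_sub_sq_real v u
  have hsum : ‖v + u‖ ^ 2 = ‖v‖ ^ 2 + 2 * (inner ℝ v u : ℝ) + ‖u‖ ^ 2 := norm_add_sq_real v u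
  have hinner : (inner ℝ (v - u) (v + u) : ℝ) = ‖v‖ ^ 2 - ‖u‖ ^ 2 := by
    rw [inner_sub_left, inner_add_right, inner_add_right, real_inner_self_eq_norm_sq,
      real_inner_self_eq_norm_sq, real_inner_comm u v]
    ring
  have hCS : (‖v‖ ^ 2 - ‖u‖ ^ 2) ^ 2 ≤ ‖v - u‖ ^ 2 * ‖v + u‖ ^ 2 := by
    rw [← hinner, ← mul_pow, ← sq_abs (inner ℝ _ _ : ℝ)]
    exact pow_le_pow_left₀ (abs_nonneg _) (abs_real_inner_le_norm _ _) 2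
  set a0 := v0 R v
  set b0 := v0 R u
  set X := 2 * a0 * b0 - 2 - 2 * R⁻¹ ^ 2 * (inner ℝ v u : ℝ) with hXdef
  have e1 : X = R⁻¹ ^ 2 * ‖v - u‖ ^ 2 - (a0 - b0) ^ 2 := by
    linear_combination ha + hb - R⁻¹ ^ 2 * hd
  have e2 : (a0 + b0) ^ 2 - R⁻¹ ^ 2 * ‖v + u‖ ^ 2 = X + 4 := by
    linear_combination ha + hb - R⁻¹ ^ 2 * hsum
  have e2' : a0 ^ 2 - b0 ^ 2 = R⁻¹ ^ 2 * (‖v‖ ^ 2 - ‖u‖ ^ 2) := by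
    linear_combination ha - hb
  have e3 : X * (a0 + b0) ^ 2 =
      R⁻¹ ^ 2 * ‖v - u‖ ^ 2 * (a0 + b0) ^ 2 - (R⁻¹ ^ 2 * (‖v‖ ^ 2 - ‖u‖ ^ 2)) ^ 2 := by
    rw [e1]
    linear_combination (-(a0 ^ 2 - b0 ^ 2 + R⁻¹ ^ 2 * (‖v‖ ^ 2 - ‖u‖ ^ 2))) * e2'
  have e4 : R⁻¹ ^ 2 * ‖v - u‖ ^ 2 * ((a0 + b0) ^ 2) =
      R⁻¹ ^ 2 * ‖v - u‖ ^ 2 * (X + 4) + R⁻¹ ^ 2 * ‖v - u‖ ^ 2 * (R⁻¹ ^ 2 * ‖v + u‖ ^ 2) := by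
    linear_combination (R⁻¹ ^ 2 * ‖v - u‖ ^ 2) * e2
  have t1 : 0 ≤ R⁻¹ ^ 2 * ‖v - u‖ ^ 2 * X :=
    mul_nonneg (by positivity) hX
  have t2 : (R⁻¹ ^ 2) ^ 2 * (‖v‖ ^ 2 - ‖u‖ ^ 2) ^ 2 ≤ (R⁻¹ ^ 2) ^ 2 * (‖v - u‖ ^ 2 * ‖v + u‖ ^ 2) :=
    mul_le_mul_of_nonneg_left hCS (by positivity)
  nlinarith [e3, e4, t1, t2]



-- g = 0 when u = v-ish not needed; lower bound for g when g ≤ 1: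
lemma g_lower (R : ℝ) (hR : 1 ≤ R) (v u : E3) (hg1 : gRel R v u ≤ 1) :
    R⁻¹ * ‖v - u‖ / (2 * v0 R u) ≤ gRel R v u := by
  have hX := key_low R hR v u
  have hgsq := g_sq R hR v u
  have hXnn : 0 ≤ gRel R v u ^ 2 := sq_nonneg _
  have ha1 := v0_one_le R v
  have hb1 := v0_one_le R u
  have ha3 : v0 R v ≤ 3 * v0 R u := by
    have := v0_le_of_g R hR v u
    nlinarith [g_nonneg R v u, mul_nonneg (g_nonneg R v u) (sub_nonneg.mpr hg1)]
  have hb0 := v0_pos R u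
  set L := R⁻¹ * ‖v - u‖ / (2 * v0 R u) with hL
  have hL0 : 0 ≤ L := by
    have : (0:ℝ) ≤ R⁻¹ * ‖v - u‖ := by positivity
    positivity
  have hsq : L ^ 2 ≤ gRel R v u ^ 2 := by
    rw [hL, div_pow, div_le_iff₀ (by positivity)]
    have h16 : (v0 R v + v0 R u) ^ 2 ≤ 16 * v0 R u ^ 2 := by nlinarith
    have := mul_le_mul_of_nonneg_left h16 (by positivity : (0:ℝ) ≤ gRel R v u ^ 2)
    rw [hgsq] at *
    nlinarith
  calc L = Real.sqrt (L ^ 2) := (Real.sqrt_sq hL0).symm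
    _ ≤ Real.sqrt (gRel R v u ^ 2) := Real.sqrt_le_sqrt hsq
    _ = gRel R v u := Real.sqrt_sq (g_nonneg R v u)

lemma g_upper (R : ℝ) (hR : 1 ≤ R) (v u : E3) :
    gRel R v u ≤ 2 * Real.sqrt (v0 R v * v0 R u) := by
  have h := g_sq_le R hR v u
  have := g_nonneg R v u
  calc gRel R v u = Real.sqrt (gRel R v u ^ 2) := (Real.sqrt_sq this).symm
    _ ≤ Real.sqrt (4 * (v0 R v * v0 R u)) := Real.sqrt_le_sqrt h
    _ = 2 * Real.sqrt (v0 R v * v0 R u) := by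
        rw [show (4:ℝ) * (v0 R v * v0 R u) = 2^2 * (v0 R v * v0 R u) by ring,
          Real.sqrt_mul (by positivity), Real.sqrt_sq (by norm_num)]

lemma ab_one_le (R : ℝ) (v u : E3) : 1 ≤ v0 R v * v0 R u := by
  nlinarith [v0_one_le R v, v0_one_le R u]

lemma sqrt_ab_one_le (R : ℝ) (v u : E3) : 1 ≤ Real.sqrt (v0 R v * v0 R u) :=
  Real.one_le_sqrt.mpr (ab_one_le R v u)

lemma sqrtS_le (R : ℝ) (hR : 1 ≤ R) (v u : E3) :
    Real.sqrt (sRel R v u) ≤ 3 * Real.sqrt (v0 R v * v0 R u) := by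
  have h1 : sRel R v u ≤ 9 * (v0 R v * v0 R u) := by
    have := g_sq_le R hR v u
    have h2 := ab_one_le R v u
    simp only [sRel]; nlinarith
  calc Real.sqrt (sRel R v u) ≤ Real.sqrt (9 * (v0 R v * v0 R u)) := Real.sqrt_le_sqrt h1
    _ = 3 * Real.sqrt (v0 R v * v0 R u) := by
        rw [show (9:ℝ) * (v0 R v * v0 R u) = 3^2 * (v0 R v * v0 R u) by ring,
          Real.sqrt_mul (by positivity), Real.sqrt_sq (by norm_num)]

/-- `√s/(a0 b0) ≤ 3/√(a0 b0)` -/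
lemma sqrtS_div_le (R : ℝ) (hR : 1 ≤ R) (v u : E3) :
    Real.sqrt (sRel R v u) / (v0 R v * v0 R u) ≤ 3 / Real.sqrt (v0 R v * v0 R u) := by
  have hab : (0:ℝ) < v0 R v * v0 R u := mul_pos (v0_pos R v) (v0_pos R u)
  have h1 := sqrtS_le R hR v u
  have h3 : (0:ℝ) < Real.sqrt (v0 R v * v0 R u) := Real.sqrt_pos.mpr hab
  rw [div_le_div_iff₀ hab h3]
  calc Real.sqrt (sRel R v u) * Real.sqrt (v0 R v * v0 R u)
      ≤ (3 * Real.sqrt (v0 R v * v0 R u)) * Real.sqrt (v0 R v * v0 R u) :=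
        mul_le_mul_of_nonneg_right h1 h3.le
    _ = 3 * (Real.sqrt (v0 R v * v0 R u) * Real.sqrt (v0 R v * v0 R u)) := by ring
    _ = 3 * (v0 R v * v0 R u) := by rw [Real.mul_self_sqrt hab.le]

lemma vphi_nonneg (R : ℝ) (v u : E3) : 0 ≤ vphi R v u := by
  unfold vphi
  have := g_nonneg R v u
  have := Real.sqrt_nonneg (sRel R v u)
  have := (mul_pos (v0_pos R v) (v0_pos R u)).le
  positivity

/-- the β ≤ 1 pointwise bound -/
lemma pt_low {β R : ℝ} (hβ0 : 0 ≤ β) (hβ1 : β ≤ 1) (hR : 1 ≤ R) (v u : E3) :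
    vphi R v u * gRel R v u ^ (-β) * Real.exp (-‖u‖ ^ 2) ≤
      5184 * Real.exp (-(1/2) * ‖u‖ ^ 2) := by
  have hE : Real.exp (-‖u‖ ^ 2) ≤ Real.exp (-(1/2) * ‖u‖ ^ 2) :=
    Real.exp_le_exp.2 (by nlinarith [sq_nonneg ‖u‖])
  have hE0 : (0:ℝ) < Real.exp (-(1/2) * ‖u‖ ^ 2) := Real.exp_pos _
  have key : vphi R v u * gRel R v u ^ (-β) ≤ 6 := by
    rcases eq_or_lt_of_le (g_nonneg R v u) with hg | hg
    · have : vphi R v u = 0 := by unfold vphi; rw [← hg]; simp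
      rw [this, zero_mul]; norm_num
    · have hab : (0:ℝ) < v0 R v * v0 R u := mul_pos (v0_pos R v) (v0_pos R u)
      have hsab := sqrt_ab_one_le R v u
      have hsab0 : (0:ℝ) < Real.sqrt (v0 R v * v0 R u) := by linarith
      have h1 : vphi R v u * gRel R v u ^ (-β) =
          gRel R v u ^ (1 - β) * (Real.sqrt (sRel R v u) / (v0 R v * v0 R u)) := by
        unfold vphi
        rw [show (1:ℝ) - β = 1 + -β by ring, Real.rpow_add hg, Real.rpow_one]
        ring
      rw [h1]
      have h2 : gRel R v u ^ (1 - β) ≤ 2 * Real.sqrt (v0 R v * v0 R u) := by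
        calc gRel R v u ^ (1 - β) ≤ (2 * Real.sqrt (v0 R v * v0 R u)) ^ (1 - β) :=
              Real.rpow_le_rpow hg.le (g_upper R hR v u) (by linarith)
          _ ≤ (2 * Real.sqrt (v0 R v * v0 R u)) ^ (1:ℝ) :=
              Real.rpow_le_rpow_of_exponent_le (by linarith) (by linarith)
          _ = 2 * Real.sqrt (v0 R v * v0 R u) := Real.rpow_one _
      have h3 := sqrtS_div_le R hR v u
      have h4 : (0:ℝ) ≤ Real.sqrt (sRel R v u) / (v0 R v * v0 R u) := by positivity
      calc gRel R v u ^ (1 - β) * (Real.sqrt (sRel R v u) / (v0 R v * v0 R u))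
          ≤ (2 * Real.sqrt (v0 R v * v0 R u)) * (3 / Real.sqrt (v0 R v * v0 R u)) := by
            apply mul_le_mul h2 h3 h4 (by positivity)
        _ = 6 := by field_simp; ring
  have h0 : 0 ≤ vphi R v u * gRel R v u ^ (-β) :=
    mul_nonneg (vphi_nonneg R v u) (Real.rpow_nonneg (g_nonneg R v u) _)
  calc vphi R v u * gRel R v u ^ (-β) * Real.exp (-‖u‖ ^ 2)
      ≤ 6 * Real.exp (-(1/2) * ‖u‖ ^ 2) := by
        apply mul_le_mul key (le_trans (le_refl _) hE) (Real.exp_pos _).le (by norm_num)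
    _ ≤ 5184 * Real.exp (-(1/2) * ‖u‖ ^ 2) := by nlinarith



/-- cubic Gaussian absorption -/
lemma cube_exp (R : ℝ) (hR : 1 ≤ R) (u : E3) :
    v0 R u ^ 3 * Real.exp (-‖u‖ ^ 2) ≤ 216 * Real.exp (-(1/2) * ‖u‖ ^ 2) := by
  set t := ‖u‖ ^ 2 with ht
  have ht0 : 0 ≤ t := by positivity
  have hb1 := v0_one_le R u
  have hbsq := v0_sq R u
  have hR0 : 0 < R := by linarith
  have hrle : R⁻¹ ^ 2 ≤ 1 := by
    have h1 : R⁻¹ ≤ 1 := by rw [inv_le_one_iff₀]; right; exact hR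
    have h2 : 0 ≤ R⁻¹ := by positivity
    nlinarith
  have hb_le : v0 R u ≤ 1 + t := by nlinarith [sq_nonneg ‖u‖]
  have hcube : v0 R u ^ 3 ≤ (1 + t) ^ 3 := by
    apply pow_le_pow_left₀ (by linarith) hb_le
  have hexp : 1 + t/6 ≤ Real.exp (t/6) := by
    have := Real.add_one_le_exp (t/6); linarith
  have hexp3 : (1 + t/6) ^ 3 ≤ Real.exp (t/2) := by
    calc (1 + t/6) ^ 3 ≤ Real.exp (t/6) ^ 3 := pow_le_pow_left₀ (by linarith) hexp 3
      _ = Real.exp (t/2) := by rw [← Real.exp_nat_mul]; congr 1; ring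
  have hkey : v0 R u ^ 3 ≤ 216 * Real.exp (t/2) := by
    calc v0 R u ^ 3 ≤ (1 + t) ^ 3 := hcube
      _ ≤ 216 * (1 + t/6) ^ 3 := by nlinarith
      _ ≤ 216 * Real.exp (t/2) := by linarith
  calc v0 R u ^ 3 * Real.exp (-t) ≤ (216 * Real.exp (t/2)) * Real.exp (-t) :=
        mul_le_mul_of_nonneg_right hkey (Real.exp_pos _).le
    _ = 216 * Real.exp (-(1/2) * t) := by
        rw [mul_assoc, ← Real.exp_add]; ring_nf

/-- the β ≥ 1 pointwise bound -/
lemma pt_high {β R : ℝ} (hβ1 : 1 ≤ β) (hβ4 : β ≤ 4) (hR : 1 ≤ R) (v u : E3) :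
    vphi R v u * gRel R v u ^ (-β) * Real.exp (-‖u‖ ^ 2) ≤
      R ^ (β - 1) * 5184 * (Real.exp (-(1/2) * ‖u‖ ^ 2) +
        (Metric.closedBall v 1).indicator (fun w => ‖v - w‖ ^ (1 - β)) u) := by
  have hR0 : (0:ℝ) < R := by linarith
  have hRpow1 : 1 ≤ R ^ (β - 1) := Real.one_le_rpow hR (by linarith)
  have hind0 : 0 ≤ (Metric.closedBall v 1).indicator (fun w => ‖v - w‖ ^ (1 - β)) u :=
    Set.indicator_nonneg (fun w _ => Real.rpow_nonneg (norm_nonneg _) _) u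
  have hE0 : (0:ℝ) < Real.exp (-(1/2) * ‖u‖ ^ 2) := Real.exp_pos _
  have hE : Real.exp (-‖u‖ ^ 2) ≤ Real.exp (-(1/2) * ‖u‖ ^ 2) :=
    Real.exp_le_exp.2 (by nlinarith [sq_nonneg ‖u‖])
  rcases eq_or_lt_of_le (g_nonneg R v u) with hg | hg
  · have hv : vphi R v u = 0 := by unfold vphi; rw [← hg]; simp
    rw [hv, zero_mul, zero_mul]
    positivity
  · have hab : (0:ℝ) < v0 R v * v0 R u := by nlinarith [ab_one_le R v u]
    have hsab := sqrt_ab_one_le R v u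
    have h1 : vphi R v u * gRel R v u ^ (-β) =
        gRel R v u ^ (1 - β) * (Real.sqrt (sRel R v u) / (v0 R v * v0 R u)) := by
      unfold vphi
      rw [show (1:ℝ) - β = 1 + -β by ring, Real.rpow_add hg, Real.rpow_one]
      ring
    have hq : Real.sqrt (sRel R v u) / (v0 R v * v0 R u) ≤ 3 := by
      calc Real.sqrt (sRel R v u) / (v0 R v * v0 R u) ≤ 3 / Real.sqrt (v0 R v * v0 R u) :=
            sqrtS_div_le R hR v u
        _ ≤ 3 / 1 := by
            apply div_le_div_of_nonneg_left (by norm_num) (by norm_num) hsab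
        _ = 3 := by norm_num
    have hq0 : (0:ℝ) ≤ Real.sqrt (sRel R v u) / (v0 R v * v0 R u) := by positivity
    by_cases hg1 : 1 ≤ gRel R v u
    · -- large g: g^{1-β} ≤ 1
      have h2 : gRel R v u ^ (1 - β) ≤ 1 :=
        Real.rpow_le_one_of_one_le_of_nonpos hg1 (by linarith)
      have h3 : vphi R v u * gRel R v u ^ (-β) ≤ 3 := by
        rw [h1]
        calc gRel R v u ^ (1 - β) * (Real.sqrt (sRel R v u) / (v0 R v * v0 R u))
            ≤ 1 * 3 := mul_le_mul h2 hq hq0 one_pos.le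
          _ = 3 := by norm_num
      calc vphi R v u * gRel R v u ^ (-β) * Real.exp (-‖u‖ ^ 2)
          ≤ 3 * Real.exp (-(1/2) * ‖u‖ ^ 2) :=
            mul_le_mul h3 hE (Real.exp_pos _).le (by norm_num)
        _ ≤ R ^ (β - 1) * 5184 * (Real.exp (-(1/2) * ‖u‖ ^ 2) +
            (Metric.closedBall v 1).indicator (fun w => ‖v - w‖ ^ (1 - β)) u) := by
            nlinarith
    · -- small g
      push_neg at hg1
      have hb0 := v0_pos R u
      have hdn0 : 0 < ‖v - u‖ := by
        rcases eq_or_lt_of_le (norm_nonneg (v - u)) with h | h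
        · exfalso
          have hvu : v = u := by
            have := (norm_eq_zero.mp h.symm); exact sub_eq_zero.mp this
          have : gRel R v u ^ 2 = 0 := by
            rw [g_sq R hR v u, hvu, real_inner_self_eq_norm_sq]
            have := v0_sq R u
            nlinarith
          nlinarith
        · exact h
      set L := R⁻¹ * ‖v - u‖ / (2 * v0 R u) with hL
      have hL0 : 0 < L := by positivity
      have hLg := g_lower R hR v u hg1.le
      have h2 : gRel R v u ^ (1 - β) ≤ L ^ (1 - β) :=
        Real.rpow_le_rpow_of_nonpos hL0 hLg (by linarith)
      -- compute L ^ (1-β)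
      have hsplit : L ^ (1 - β) = R ^ (β - 1) * ‖v - u‖ ^ (1 - β) * (2 * v0 R u) ^ (β - 1) := by
        have hRinv : (R⁻¹ : ℝ) ^ (1 - β) = R ^ (β - 1) := by
          rw [Real.inv_rpow hR0.le, ← Real.rpow_neg hR0.le, neg_sub]
        have hden : (2 * v0 R u) ^ ((1:ℝ) - β) = ((2 * v0 R u) ^ (β - 1))⁻¹ := by
          rw [← Real.rpow_neg (by positivity : (0:ℝ) ≤ 2 * v0 R u), neg_sub]
        rw [hL, Real.div_rpow (by positivity) (by positivity),
          Real.mul_rpow (by positivity) (by positivity), hRinv, hden, div_inv_eq_mul]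
      have h2b0 : (1:ℝ) ≤ 2 * v0 R u := by nlinarith [v0_one_le R u]
      have hpow3 : (2 * v0 R u) ^ (β - 1) ≤ 8 * v0 R u ^ 3 := by
        calc (2 * v0 R u) ^ (β - 1) ≤ (2 * v0 R u) ^ (3:ℝ) :=
              Real.rpow_le_rpow_of_exponent_le h2b0 (by linarith)
          _ = 8 * v0 R u ^ 3 := by
              rw [show (3:ℝ) = ((3:ℕ):ℝ) by norm_num, Real.rpow_natCast]; ring
      have hdnpow0 : (0:ℝ) ≤ ‖v - u‖ ^ (1 - β) := Real.rpow_nonneg (norm_nonneg _) _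
      have h3 : gRel R v u ^ (1 - β) ≤ R ^ (β - 1) * ‖v - u‖ ^ (1 - β) * (8 * v0 R u ^ 3) := by
        calc gRel R v u ^ (1 - β) ≤ L ^ (1 - β) := h2
          _ = R ^ (β - 1) * ‖v - u‖ ^ (1 - β) * (2 * v0 R u) ^ (β - 1) := hsplit
          _ ≤ R ^ (β - 1) * ‖v - u‖ ^ (1 - β) * (8 * v0 R u ^ 3) := by
              apply mul_le_mul_of_nonneg_left hpow3 (by positivity)
      have hg0 : (0:ℝ) ≤ gRel R v u ^ (1 - β) := Real.rpow_nonneg (g_nonneg R v u) _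
      have h4 : vphi R v u * gRel R v u ^ (-β) * Real.exp (-‖u‖ ^ 2) ≤
          R ^ (β - 1) * 24 * (‖v - u‖ ^ (1 - β) * (v0 R u ^ 3 * Real.exp (-‖u‖ ^ 2))) := by
        rw [h1]
        have step1 : gRel R v u ^ (1 - β) * (Real.sqrt (sRel R v u) / (v0 R v * v0 R u)) ≤
            (R ^ (β - 1) * ‖v - u‖ ^ (1 - β) * (8 * v0 R u ^ 3)) * 3 :=
          mul_le_mul h3 hq hq0 (by positivity)
        calc gRel R v u ^ (1 - β) * (Real.sqrt (sRel R v u) / (v0 R v * v0 R u)) *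
              Real.exp (-‖u‖ ^ 2)
            ≤ ((R ^ (β - 1) * ‖v - u‖ ^ (1 - β) * (8 * v0 R u ^ 3)) * 3) *
              Real.exp (-‖u‖ ^ 2) :=
              mul_le_mul_of_nonneg_right step1 (Real.exp_pos _).le
          _ = R ^ (β - 1) * 24 * (‖v - u‖ ^ (1 - β) * (v0 R u ^ 3 * Real.exp (-‖u‖ ^ 2))) := by
              ring
      have hcube := cube_exp R hR u
      have h5 : vphi R v u * gRel R v u ^ (-β) * Real.exp (-‖u‖ ^ 2) ≤
          R ^ (β - 1) * 5184 * (‖v - u‖ ^ (1 - β) * Real.exp (-(1/2) * ‖u‖ ^ 2)) := by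
        calc vphi R v u * gRel R v u ^ (-β) * Real.exp (-‖u‖ ^ 2)
            ≤ R ^ (β - 1) * 24 * (‖v - u‖ ^ (1 - β) * (v0 R u ^ 3 * Real.exp (-‖u‖ ^ 2))) := h4
          _ ≤ R ^ (β - 1) * 24 * (‖v - u‖ ^ (1 - β) * (216 * Real.exp (-(1/2) * ‖u‖ ^ 2))) := by
              apply mul_le_mul_of_nonneg_left _ (by positivity)
              exact mul_le_mul_of_nonneg_left hcube hdnpow0
          _ = R ^ (β - 1) * 5184 * (‖v - u‖ ^ (1 - β) * Real.exp (-(1/2) * ‖u‖ ^ 2)) := by ring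
      by_cases hdn1 : ‖v - u‖ ≤ 1
      · have hmem : u ∈ Metric.closedBall v 1 := by
          rw [Metric.mem_closedBall, dist_comm, dist_eq_norm]; exact hdn1
        have hindeq : (Metric.closedBall v 1).indicator (fun w => ‖v - w‖ ^ (1 - β)) u =
            ‖v - u‖ ^ (1 - β) := Set.indicator_of_mem hmem _
        have hEle1 : Real.exp (-(1/2) * ‖u‖ ^ 2) ≤ 1 := by
          rw [Real.exp_le_one_iff]; nlinarith [sq_nonneg ‖u‖]
        calc vphi R v u * gRel R v u ^ (-β) * Real.exp (-‖u‖ ^ 2)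
            ≤ R ^ (β - 1) * 5184 * (‖v - u‖ ^ (1 - β) * Real.exp (-(1/2) * ‖u‖ ^ 2)) := h5
          _ ≤ R ^ (β - 1) * 5184 * (Real.exp (-(1/2) * ‖u‖ ^ 2) +
              (Metric.closedBall v 1).indicator (fun w => ‖v - w‖ ^ (1 - β)) u) := by
              apply mul_le_mul_of_nonneg_left _ (by positivity)
              rw [hindeq]
              nlinarith [mul_le_mul_of_nonneg_left hEle1 hdnpow0]
      · push_neg at hdn1
        have hdnle : ‖v - u‖ ^ (1 - β) ≤ 1 :=
          Real.rpow_le_one_of_one_le_of_nonpos hdn1.le (by linarith)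
        calc vphi R v u * gRel R v u ^ (-β) * Real.exp (-‖u‖ ^ 2)
            ≤ R ^ (β - 1) * 5184 * (‖v - u‖ ^ (1 - β) * Real.exp (-(1/2) * ‖u‖ ^ 2)) := h5
          _ ≤ R ^ (β - 1) * 5184 * (Real.exp (-(1/2) * ‖u‖ ^ 2) +
              (Metric.closedBall v 1).indicator (fun w => ‖v - w‖ ^ (1 - β)) u) := by
              apply mul_le_mul_of_nonneg_left _ (by positivity)
              nlinarith [mul_le_mul_of_nonneg_right hdnle hE0.le]
      


/-- Integrability of the Gaussian on E3 -/
lemma exp_integrable : Integrable (fun u : E3 => Real.exp (-(1/2) * ‖u‖ ^ 2)) := by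
  have h := GaussianFourier.integrable_cexp_neg_mul_sq_norm_add (V := E3)
    (b := (1/2 : ℂ)) (by norm_num) 0 0
  have h2 := h.norm
  refine h2.congr (Filter.Eventually.of_forall fun u => ?_)
  have : ((-(1/2 : ℂ)) * (‖u‖:ℂ) ^ 2 + 0 * (inner ℝ (0:E3) u : ℝ)).re = -(1/2) * ‖u‖ ^ 2 := by
    simp [← Complex.ofReal_pow]
  simp only [Complex.norm_exp, this]

/-- finiteness of the singular integral over the unit ball -/
lemma KB_lt_top {β : ℝ} (hβ1 : 1 ≤ β) (hβ4 : β < 4) :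
    (∫⁻ w : E3 in Metric.closedBall 0 1, ENNReal.ofReal (‖w‖ ^ (1 - β))) < ⊤ := by
  rcases eq_or_lt_of_le hβ1 with heq | hlt
  · simp only [← heq, sub_self, Real.rpow_zero, ENNReal.ofReal_one]
    rw [setLIntegral_one]
    exact measure_closedBall_lt_top
  · set μ' := (volume : Measure E3).restrict (Metric.closedBall 0 1) with hμ'
    have hnn : 0 ≤ᵐ[μ'] fun w : E3 => ‖w‖ ^ (1 - β) :=
      Filter.Eventually.of_forall fun w => Real.rpow_nonneg (norm_nonneg _) _
    have hmeas : AEMeasurable (fun w : E3 => ‖w‖ ^ (1 - β)) μ' :=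
      (measurable_norm.pow_const _).aemeasurable |>.mono_measure Measure.restrict_le_self
    rw [lintegral_eq_lintegral_meas_le μ' hnn hmeas]
    have hβ0 : 0 < β - 1 := by linarith
    set V := (volume : Measure E3) (Metric.ball 0 1) with hV
    have hVfin : V < ⊤ := measure_ball_lt_top
    calc ∫⁻ t in Set.Ioi (0:ℝ), μ' {a : E3 | t ≤ ‖a‖ ^ (1 - β)}
        ≤ ∫⁻ t in Set.Ioc (0:ℝ) 1 ∪ Set.Ioi 1, μ' {a : E3 | t ≤ ‖a‖ ^ (1 - β)} :=
          lintegral_mono_set Set.Ioi_subset_Ioc_union_Ioi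
      _ ≤ (∫⁻ t in Set.Ioc (0:ℝ) 1, μ' {a : E3 | t ≤ ‖a‖ ^ (1 - β)}) +
          ∫⁻ t in Set.Ioi (1:ℝ), μ' {a : E3 | t ≤ ‖a‖ ^ (1 - β)} := lintegral_union_le _ _ _
      _ < ⊤ := by
          apply ENNReal.add_lt_top.2
          constructor
          · calc (∫⁻ t in Set.Ioc (0:ℝ) 1, μ' {a : E3 | t ≤ ‖a‖ ^ (1 - β)})
                ≤ ∫⁻ _ in Set.Ioc (0:ℝ) 1, (volume : Measure E3) (Metric.closedBall 0 1) := by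
                  apply setLIntegral_mono' measurableSet_Ioc
                  intro t _
                  calc μ' {a : E3 | t ≤ ‖a‖ ^ (1 - β)} ≤ μ' Set.univ :=
                        measure_mono (Set.subset_univ _)
                    _ = (volume : Measure E3) (Metric.closedBall 0 1) := by
                        rw [hμ', Measure.restrict_apply_univ]
              _ = (volume : Measure E3) (Metric.closedBall 0 1) * volume (Set.Ioc (0:ℝ) 1) :=
                  setLIntegral_const _ _
              _ < ⊤ := by
                  apply ENNReal.mul_lt_top measure_closedBall_lt_top
                  simp [Real.volume_Ioc]
          · have hbound : ∀ t ∈ Set.Ioi (1:ℝ), μ' {a : E3 | t ≤ ‖a‖ ^ (1 - β)} ≤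
                ENNReal.ofReal (t ^ (3 * (1 - β)⁻¹)) * V := by
              intro t ht
              have ht1 : (1:ℝ) < t := ht
              have ht0 : (0:ℝ) < t := by linarith
              have hsub : {a : E3 | t ≤ ‖a‖ ^ (1 - β)} ⊆
                  Metric.closedBall 0 (t ^ ((1 - β)⁻¹)) := by
                intro a ha
                simp only [Set.mem_setOf_eq] at ha
                have ha0 : a ≠ 0 := by
                  intro h0
                  rw [h0, norm_zero, Real.zero_rpow (by intro h; linarith)] at ha
                  linarith
                have han : 0 < ‖a‖ := norm_pos_iff.mpr ha0
                rw [Metric.mem_closedBall, dist_zero_right]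
                have := Real.rpow_le_rpow_of_nonpos ht0 ha
                  (by
                    rw [inv_nonpos]
                    linarith : (1 - β)⁻¹ ≤ 0)
                calc ‖a‖ = (‖a‖ ^ (1 - β)) ^ ((1 - β)⁻¹) := by
                      rw [← Real.rpow_mul han.le, mul_inv_cancel₀ (by linarith), Real.rpow_one]
                  _ ≤ t ^ ((1 - β)⁻¹) := this
              calc μ' {a : E3 | t ≤ ‖a‖ ^ (1 - β)} ≤
                    (volume : Measure E3) {a : E3 | t ≤ ‖a‖ ^ (1 - β)} :=
                    Measure.restrict_le_self _
                _ ≤ (volume : Measure E3) (Metric.closedBall 0 (t ^ ((1 - β)⁻¹))) :=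
                    measure_mono hsub
                _ = ENNReal.ofReal ((t ^ ((1 - β)⁻¹)) ^ (Module.finrank ℝ E3)) * V := by
                    rw [Measure.addHaar_closedBall _ _ (Real.rpow_nonneg ht0.le _)]
                _ = ENNReal.ofReal (t ^ (3 * (1 - β)⁻¹)) * V := by
                    congr 1
                    rw [show Module.finrank ℝ E3 = 3 from ?_]
                    · rw [← Real.rpow_natCast (t ^ ((1 - β)⁻¹)) 3, ← Real.rpow_mul ht0.le]
                      congr 1; ring
                    · simp [finrank_euclideanSpace]

            calc (∫⁻ t in Set.Ioi (1:ℝ), μ' {a : E3 | t ≤ ‖a‖ ^ (1 - β)})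
                ≤ ∫⁻ t in Set.Ioi (1:ℝ), ENNReal.ofReal (t ^ (3 * (1 - β)⁻¹)) * V :=
                  setLIntegral_mono' measurableSet_Ioi hbound
              _ = (∫⁻ t in Set.Ioi (1:ℝ), ENNReal.ofReal (t ^ (3 * (1 - β)⁻¹))) * V :=
                  lintegral_mul_const' _ _ hVfin.ne
              _ < ⊤ := by
                  apply ENNReal.mul_lt_top _ hVfin
                  have hexp : 3 * (1 - β)⁻¹ < -1 := by
                    have h1 : (1 - β)⁻¹ = -((β - 1)⁻¹) := by
                      rw [show (1:ℝ) - β = -(β - 1) by ring, inv_neg]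
                    rw [h1]
                    have : 1 < 3 * (β - 1)⁻¹ := by
                      rw [show (3:ℝ) * (β - 1)⁻¹ = 3 / (β - 1) by ring, lt_div_iff₀ hβ0]
                      linarith
                    linarith
                  exact (integrableOn_Ioi_rpow_of_lt hexp one_pos).setLIntegral_lt_top
  


lemma integrand_meas (β R : ℝ) (hR : 1 ≤ R) (v : E3) :
    AEStronglyMeasurable
      (fun u : E3 => vphi R v u * gRel R v u ^ (-β) * Real.exp (-‖u‖ ^ 2)) volume := by
  have hv0 : Continuous (fun u : E3 => v0 R u) := by
    apply Real.continuous_sqrt.comp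
    continuity
  have hg : Continuous (fun u : E3 => gRel R v u) := by
    apply Real.continuous_sqrt.comp
    have : Continuous (fun u : E3 => (inner ℝ v u : ℝ)) := continuous_const.inner continuous_id
    continuity
  have hvphi : Continuous (fun u : E3 => vphi R v u) := by
    apply Continuous.div
    · apply Continuous.mul hg
      apply Real.continuous_sqrt.comp
      have : Continuous (fun u : E3 => sRel R v u) := by
        unfold sRel; continuity
      exact this
    · continuity
    · intro u
      exact ne_of_gt (mul_pos (v0_pos R v) (v0_pos R u))
  apply Measurable.aestronglyMeasurable
  apply Measurable.mul
  apply Measurable.mul hvphi.measurable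
  · exact hg.measurable.pow_const _
  · exact (Real.continuous_exp.comp (by continuity)).measurable

/-- translation invariance of the ball integral -/
lemma ball_translate (β : ℝ) (v : E3) :
    (∫⁻ u : E3, (Metric.closedBall v 1).indicator
        (fun w => ENNReal.ofReal (‖v - w‖ ^ (1 - β))) u) =
      ∫⁻ w : E3 in Metric.closedBall 0 1, ENNReal.ofReal (‖w‖ ^ (1 - β)) := by
  have hmp : MeasurePreserving (fun w : E3 => v - w) volume volume :=
    Measure.measurePreserving_sub_left volume v
  have hmeas : Measurable (fun w : E3 =>
      (Metric.closedBall (0:E3) 1).indicator (fun x => ENNReal.ofReal (‖x‖ ^ (1 - β))) w) := by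
    apply Measurable.indicator _ measurableSet_closedBall
    exact (measurable_norm.pow_const _).ennreal_ofReal
  have h := hmp.lintegral_comp hmeas
  rw [← lintegral_indicator measurableSet_closedBall]
  rw [← h]
  apply lintegral_congr
  intro u
  by_cases hu : u ∈ Metric.closedBall v 1
  · have h1 : v - u ∈ Metric.closedBall (0:E3) 1 := by
      rw [Metric.mem_closedBall, dist_zero_right]
      rw [Metric.mem_closedBall, dist_comm, dist_eq_norm] at hu
      exact hu
    rw [Set.indicator_of_mem hu, Set.indicator_of_mem h1]
  · have h1 : v - u ∉ Metric.closedBall (0:E3) 1 := by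
      rw [Metric.mem_closedBall, dist_zero_right]
      rw [Metric.mem_closedBall, dist_comm, dist_eq_norm] at hu
      exact hu
    rw [Set.indicator_of_notMem hu, Set.indicator_of_notMem h1]

theorem main (β : ℝ) (hβ0 : 0 ≤ β) (hβ4 : β < 4) :
    ∃ C : ℝ, 0 < C ∧ ∀ R : ℝ, 1 ≤ R → ∀ v : EuclideanSpace ℝ (Fin 3),
      (β ≤ 1 →
        ∫ u : EuclideanSpace ℝ (Fin 3),
            vphi R v u * gRel R v u ^ (-β) * Real.exp (-‖u‖ ^ 2) ≤ C) ∧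
      (1 ≤ β →
        ∫ u : EuclideanSpace ℝ (Fin 3),
            vphi R v u * gRel R v u ^ (-β) * Real.exp (-‖u‖ ^ 2) ≤
          C * R ^ (β - 1)) := by
  set I1 := ∫ u : E3, Real.exp (-(1/2) * ‖u‖ ^ 2) with hI1def
  have hI1 : 0 ≤ I1 := integral_nonneg fun u => (Real.exp_pos _).le
  set KB := ∫⁻ w : E3 in Metric.closedBall 0 1, ENNReal.ofReal (‖w‖ ^ (1 - β)) with hKBdef
  set MB := KB.toReal with hMBdef
  have hMB : 0 ≤ MB := ENNReal.toReal_nonneg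
  refine ⟨5184 * (I1 + MB) + 1, by positivity, fun R hR v => ?_⟩
  have hf0 : ∀ u : E3, 0 ≤ vphi R v u * gRel R v u ^ (-β) * Real.exp (-‖u‖ ^ 2) := fun u =>
    mul_nonneg (mul_nonneg (vphi_nonneg R v u) (Real.rpow_nonneg (g_nonneg R v u) _))
      (Real.exp_pos _).le
  have hmeas := integrand_meas β R hR v
  have hrepr : (∫ u : E3, vphi R v u * gRel R v u ^ (-β) * Real.exp (-‖u‖ ^ 2)) =
      (∫⁻ u : E3, ENNReal.ofReal
        (vphi R v u * gRel R v u ^ (-β) * Real.exp (-‖u‖ ^ 2))).toReal :=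
    integral_eq_lintegral_of_nonneg_ae (Filter.Eventually.of_forall hf0) hmeas
  have hexpReprl : (∫⁻ u : E3, ENNReal.ofReal (Real.exp (-(1/2) * ‖u‖ ^ 2))) =
      ENNReal.ofReal I1 :=
    (ofReal_integral_eq_lintegral_ofReal exp_integrable
      (Filter.Eventually.of_forall fun u => (Real.exp_pos _).le)).symm
  constructor
  · -- β ≤ 1
    intro hβ1
    rw [hrepr]
    apply ENNReal.toReal_le_of_le_ofReal (by positivity)
    calc (∫⁻ u : E3, ENNReal.ofReal
          (vphi R v u * gRel R v u ^ (-β) * Real.exp (-‖u‖ ^ 2)))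
        ≤ ∫⁻ u : E3, ENNReal.ofReal (5184 * Real.exp (-(1/2) * ‖u‖ ^ 2)) :=
          lintegral_mono fun u => ENNReal.ofReal_le_ofReal (pt_low hβ0 hβ1 hR v u)
      _ = ∫⁻ u : E3, ENNReal.ofReal 5184 * ENNReal.ofReal (Real.exp (-(1/2) * ‖u‖ ^ 2)) := by
          apply lintegral_congr fun u => ?_
          rw [ENNReal.ofReal_mul (by norm_num)]
      _ = ENNReal.ofReal 5184 * ENNReal.ofReal I1 := by
          rw [lintegral_const_mul' _ _ ENNReal.ofReal_ne_top, hexpReprl]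
      _ = ENNReal.ofReal (5184 * I1) := (ENNReal.ofReal_mul (by norm_num)).symm
      _ ≤ ENNReal.ofReal (5184 * (I1 + MB) + 1) := by
          apply ENNReal.ofReal_le_ofReal
          nlinarith
  · -- 1 ≤ β
    intro hβ1
    have hKBfin := KB_lt_top hβ1 hβ4
    have hRpow0 : (0:ℝ) ≤ R ^ (β - 1) := Real.rpow_nonneg (by linarith) _
    rw [hrepr]
    apply ENNReal.toReal_le_of_le_ofReal (by positivity)
    have hintmeas : Measurable (fun u : E3 =>
        ENNReal.ofReal (Real.exp (-(1/2) * ‖u‖ ^ 2))) :=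
      (Real.continuous_exp.comp (by continuity)).measurable.ennreal_ofReal
    calc (∫⁻ u : E3, ENNReal.ofReal
          (vphi R v u * gRel R v u ^ (-β) * Real.exp (-‖u‖ ^ 2)))
        ≤ ∫⁻ u : E3, ENNReal.ofReal (R ^ (β - 1) * 5184 *
            (Real.exp (-(1/2) * ‖u‖ ^ 2) +
              (Metric.closedBall v 1).indicator (fun w => ‖v - w‖ ^ (1 - β)) u)) :=
          lintegral_mono fun u => ENNReal.ofReal_le_ofReal (pt_high hβ1 hβ4.le hR v u)
      _ = ∫⁻ u : E3, ENNReal.ofReal (R ^ (β - 1) * 5184) *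
            (ENNReal.ofReal (Real.exp (-(1/2) * ‖u‖ ^ 2)) +
             (Metric.closedBall v 1).indicator
               (fun w => ENNReal.ofReal (‖v - w‖ ^ (1 - β))) u) := by
          apply lintegral_congr fun u => ?_
          rw [ENNReal.ofReal_mul (by positivity)]
          congr 1
          rw [ENNReal.ofReal_add (Real.exp_pos _).le
            (Set.indicator_nonneg (fun w _ => Real.rpow_nonneg (norm_nonneg _) _) u)]
          congr 1
          by_cases hu : u ∈ Metric.closedBall v 1
          · rw [Set.indicator_of_mem hu, Set.indicator_of_mem hu]
          · rw [Set.indicator_of_notMem hu, Set.indicator_of_notMem hu,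
              ENNReal.ofReal_zero]
      _ = ENNReal.ofReal (R ^ (β - 1) * 5184) * (ENNReal.ofReal I1 + KB) := by
          rw [lintegral_const_mul' _ _ ENNReal.ofReal_ne_top,
            lintegral_add_left hintmeas, hexpReprl, ball_translate β v]
      _ ≤ ENNReal.ofReal ((5184 * (I1 + MB) + 1) * R ^ (β - 1)) := by
          have hKB' : KB = ENNReal.ofReal MB := (ENNReal.ofReal_toReal hKBfin.ne).symm
          rw [hKB', ← ENNReal.ofReal_add hI1 hMB, ← ENNReal.ofReal_mul (by positivity)]
          apply ENNReal.ofReal_le_ofReal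
          nlinarith


end Stmt14Aux

theorem stmt14 (β : ℝ) (hβ0 : 0 ≤ β) (hβ4 : β < 4) :
    ∃ C : ℝ, 0 < C ∧ ∀ R : ℝ, 1 ≤ R → ∀ v : EuclideanSpace ℝ (Fin 3),
      (β ≤ 1 →
        ∫ u : EuclideanSpace ℝ (Fin 3),
            vphi R v u * gRel R v u ^ (-β) * Real.exp (-‖u‖ ^ 2) ≤ C) ∧
      (1 ≤ β →
        ∫ u : EuclideanSpace ℝ (Fin 3),
            vphi R v u * gRel R v u ^ (-β) * Real.exp (-‖u‖ ^ 2) ≤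
          C * R ^ (β - 1)) :=
  Stmt14Aux.main β hβ0 hβ4

end
end

section
/- There is a universal constant C > 0 (independent of R, v, u, ω̂, i, k) with the following property: fix R ≥ 1, u ∈ ℝ³ and a unit vector ω̂ ∈ ℝ³, and regard the post-collisional momentum components v'^k in the second representation as functions of v ∈ ℝ³. Then for all v with v ≠ u and v + u ≠ 0, and all i, k ∈ {1,2,3}: |∂_{v^i} v'^k| ≤ C·(Rv⁰/|v−u| + Rv⁰/|v+u| + R²(v⁰)²/|v−u|²)·(u⁰)³. -/
open Real

noncomputable section

/-- the `k`-th component of the post-collisional momentum `v'`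
in the second representation -/
def vprimeSK (R : ℝ) (u ω : EuclideanSpace ℝ (Fin 3)) (k : Fin 3)
    (v : EuclideanSpace ℝ (Fin 3)) : ℝ :=
  (v k + u k) / 2 +
    R * gRel R v u / 2 *
      (ω k - (inner ℝ (v + u) ω : ℝ) * (v + u) k / ‖v + u‖ ^ 2 +
        (v0 R v + v0 R u) / Real.sqrt (sRel R v u) *
          ((inner ℝ (v + u) ω : ℝ) * (v + u) k / ‖v + u‖ ^ 2))

namespace Stmt16

abbrev E3 := EuclideanSpace ℝ (Fin 3)

theorem sqle {x y : ℝ} (hx : 0 ≤ x) (hy : 0 ≤ y) (h : x ^ 2 ≤ y ^ 2) : x ≤ y := by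
  nlinarith

theorem tri (x y : ℝ) : |x - y| ≤ |x| + |y| := by
  rw [sub_eq_add_neg]
  exact (abs_add_le _ _).trans (by rw [abs_neg])

/-- directional derivative data at `v` in direction `single i 1` -/
def HD (v : E3) (i : Fin 3) (f : E3 → ℝ) (d : ℝ) : Prop :=
  ∃ L : E3 →L[ℝ] ℝ, HasFDerivAt f L v ∧ L (EuclideanSpace.single i 1) = d

variable {v : E3} {i : Fin 3} {f g : E3 → ℝ} {d d' : ℝ}

theorem HD.congr_d (h : HD v i f d) (hd : d = d') : HD v i f d' := hd ▸ h

theorem hd_const (c : ℝ) : HD v i (fun _ => c) 0 := ⟨0, hasFDerivAt_const c v, rfl⟩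

theorem HD.add (h : HD v i f d) (h' : HD v i g d') :
    HD v i (fun x => f x + g x) (d + d') := by
  obtain ⟨L, hL, he⟩ := h; obtain ⟨L', hL', he'⟩ := h'
  exact ⟨L + L', hL.add hL', by simp [he, he']⟩

theorem HD.sub (h : HD v i f d) (h' : HD v i g d') :
    HD v i (fun x => f x - g x) (d - d') := by
  obtain ⟨L, hL, he⟩ := h; obtain ⟨L', hL', he'⟩ := h'
  exact ⟨L - L', hL.sub hL', by simp [he, he']⟩

theorem HD.mul (h : HD v i f d) (h' : HD v i g d') :
    HD v i (fun x => f x * g x) (f v * d' + g v * d) := by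
  obtain ⟨L, hL, he⟩ := h; obtain ⟨L', hL', he'⟩ := h'
  exact ⟨f v • L' + g v • L, hL.mul hL', by simp [he, he']⟩

theorem HD.inv (h : HD v i f d) (hx : f v ≠ 0) :
    HD v i (fun x => (f x)⁻¹) (-(d / f v ^ 2)) := by
  obtain ⟨L, hL, he⟩ := h
  refine ⟨(-(f v ^ 2)⁻¹) • L, (hasDerivAt_inv hx).comp_hasFDerivAt v hL, ?_⟩
  simp [he]; field_simp

theorem HD.div (h : HD v i f d) (h' : HD v i g d') (hx : g v ≠ 0) :
    HD v i (fun x => f x / g x) ((d * g v - f v * d') / g v ^ 2) := by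
  have h2 : HD v i (fun x => f x * (g x)⁻¹) (f v * -(d' / g v ^ 2) + (g v)⁻¹ * d) :=
    h.mul (h'.inv hx)
  have h3 : (fun x => f x / g x) = fun x => f x * (g x)⁻¹ := by
    funext x; rw [div_eq_mul_inv]
  rw [h3]; exact h2.congr_d (by field_simp; ring)

theorem HD.sqrt (h : HD v i f d) (hx : f v ≠ 0) :
    HD v i (fun x => Real.sqrt (f x)) (d / (2 * Real.sqrt (f v))) := by
  obtain ⟨L, hL, he⟩ := h
  exact ⟨(1 / (2 * Real.sqrt (f v))) • L, hL.sqrt hx, by simp [he]; ring⟩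

theorem HD.pow2 (h : HD v i f d) : HD v i (fun x => f x ^ 2) (2 * f v * d) := by
  have h2 : HD v i (fun x => f x * f x) (f v * d + f v * d) := h.mul h
  have h3 : (fun x : E3 => f x ^ 2) = fun x => f x * f x := by funext x; ring
  rw [h3]; exact h2.congr_d (by ring)

theorem hd_apply (k : Fin 3) :
    HD v i (fun x : E3 => x k) ((EuclideanSpace.single i (1:ℝ) : E3) k) :=
  ⟨EuclideanSpace.proj k, (EuclideanSpace.proj (𝕜 := ℝ) k).hasFDerivAt, rfl⟩

theorem hd_inner_right (w : E3) :
    HD v i (fun x => (inner ℝ x w : ℝ)) (inner ℝ (EuclideanSpace.single i (1:ℝ) : E3) w) := by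
  refine ⟨(fderivInnerCLM ℝ (v, w)).comp ((ContinuousLinearMap.id ℝ E3).prod 0),
    HasFDerivAt.inner ℝ (hasFDerivAt_id v) (hasFDerivAt_const w v), ?_⟩
  simp [fderivInnerCLM_apply]

theorem hd_inner_shift (u w : E3) :
    HD v i (fun x => (inner ℝ (x + u) w : ℝ)) (inner ℝ (EuclideanSpace.single i (1:ℝ) : E3) w) := by
  refine ⟨(fderivInnerCLM ℝ (v + u, w)).comp ((ContinuousLinearMap.id ℝ E3).prod 0),
    HasFDerivAt.inner ℝ ((hasFDerivAt_id v).add_const u) (hasFDerivAt_const w v), ?_⟩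
  simp [fderivInnerCLM_apply]

theorem hd_normsq : HD v i (fun x : E3 => ‖x‖ ^ 2)
    (2 * inner ℝ v (EuclideanSpace.single i (1:ℝ) : E3)) := by
  have h : HD v i (fun x : E3 => (inner ℝ x x : ℝ))
      (inner ℝ v (EuclideanSpace.single i (1:ℝ) : E3)
        + inner ℝ v (EuclideanSpace.single i (1:ℝ) : E3)) := by
    refine ⟨(fderivInnerCLM ℝ (v, v)).comp
        ((ContinuousLinearMap.id ℝ E3).prod (ContinuousLinearMap.id ℝ E3)),
      HasFDerivAt.inner ℝ (hasFDerivAt_id v) (hasFDerivAt_id v), ?_⟩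
    simp [fderivInnerCLM_apply, real_inner_comm]
  have h3 : (fun x : E3 => ‖x‖ ^ 2) = fun x : E3 => (inner ℝ x x : ℝ) := by
    funext x; exact (real_inner_self_eq_norm_sq x).symm
  rw [h3]; exact h.congr_d (by ring)

theorem hd_normsq_shift (u : E3) : HD v i (fun x : E3 => ‖x + u‖ ^ 2)
    (2 * inner ℝ (v + u) (EuclideanSpace.single i (1:ℝ) : E3)) := by
  have h : HD v i (fun x : E3 => (inner ℝ (x + u) (x + u) : ℝ))
      (inner ℝ (v + u) (EuclideanSpace.single i (1:ℝ) : E3)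
        + inner ℝ (v + u) (EuclideanSpace.single i (1:ℝ) : E3)) := by
    refine ⟨(fderivInnerCLM ℝ (v + u, v + u)).comp
        ((ContinuousLinearMap.id ℝ E3).prod (ContinuousLinearMap.id ℝ E3)),
      HasFDerivAt.inner ℝ ((hasFDerivAt_id v).add_const u) ((hasFDerivAt_id v).add_const u), ?_⟩
    simp [fderivInnerCLM_apply, real_inner_comm]
  have h3 : (fun x : E3 => ‖x + u‖ ^ 2) = fun x : E3 => (inner ℝ (x + u) (x + u) : ℝ) := by
    funext x; exact (real_inner_self_eq_norm_sq _).symm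
  rw [h3]; exact h.congr_d (by ring)

theorem endgame {b X Y Z : ℝ} (hb1 : 1 ≤ b) (hX1 : 1 ≤ 2*b*X) (hX0 : 0 < X)
    (hY0 : 0 < Y) (hZ0 : 0 ≤ Z) :
    1/2 + (10*Y*b + (1/2 + 3/2*b^2) + 6*X*b^2) ≤ 100*(X+Y+Z)*b^3 := by
  have hb0 : (0:ℝ) ≤ b := by linarith only [hb1]
  have hb2' : 1 ≤ b ^ 2 := by nlinarith only [hb1, mul_le_mul_of_nonneg_left hb1 hb0]
  have hb23 : b ^ 2 ≤ b ^ 3 := by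
    nlinarith only [mul_le_mul_of_nonneg_left hb1 (sq_nonneg b)]
  have hb13 : b ≤ b ^ 3 := by
    nlinarith only [mul_le_mul_of_nonneg_left hb1 hb0,
      mul_le_mul_of_nonneg_left hb1 (sq_nonneg b)]
  nlinarith only [hX1, hb1, hX0, hY0, hZ0, hb2', hb23, hb13,
    mul_le_mul_of_nonneg_left hX1 (by positivity : (0:ℝ) ≤ b ^ 2),
    mul_le_mul_of_nonneg_left hb23 hX0.le,
    mul_le_mul_of_nonneg_left hb13 hY0.le,
    mul_nonneg hZ0 (by positivity : (0:ℝ) ≤ b ^ 3),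
    mul_nonneg hX0.le (by positivity : (0:ℝ) ≤ b ^ 3),
    mul_nonneg hY0.le (by positivity : (0:ℝ) ≤ b ^ 3)]

theorem HD.pderiv_eq {f d} (h : HD v i f d) : pderiv i f v = d := by
  obtain ⟨L, hL, he⟩ := h
  rw [pderiv, hL.fderiv]; exact he

end Stmt16

open Stmt16 in
set_option maxHeartbeats 1000000 in
theorem stmt16 :
    ∃ C : ℝ, 0 < C ∧
      ∀ (R : ℝ), 1 ≤ R → ∀ (u ω : EuclideanSpace ℝ (Fin 3)), ‖ω‖ = 1 →
        ∀ v : EuclideanSpace ℝ (Fin 3), v ≠ u → v + u ≠ 0 → ∀ i k : Fin 3,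
          |pderiv i (vprimeSK R u ω k) v| ≤
            C * (R * v0 R v / ‖v - u‖ + R * v0 R v / ‖v + u‖ +
                R ^ 2 * v0 R v ^ 2 / ‖v - u‖ ^ 2) * v0 R u ^ 3 := by
  refine ⟨100, by norm_num, ?_⟩
  intro R hR u ω hω v hvu hvpu i k
  have hR0 : (0:ℝ) < R := lt_of_lt_of_le one_pos hR
  have hRi0 : (0:ℝ) < R⁻¹ := inv_pos.2 hR0
  have hRR : R * R⁻¹ = 1 := mul_inv_cancel₀ hR0.ne'
  set eV : EuclideanSpace ℝ (Fin 3) := EuclideanSpace.single i (1:ℝ) with heVdef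
  set a := v0 R v with ha
  set b := v0 R u with hb
  set g := gRel R v u with hgdef
  set σ := Real.sqrt (sRel R v u) with hσdef
  set ip : ℝ := (inner ℝ v u : ℝ) with hip
  -- ### basic quantitative facts
  have ha2 : a ^ 2 = 1 + R⁻¹ ^ 2 * ‖v‖ ^ 2 := by
    rw [ha, v0]; exact Real.sq_sqrt (by positivity)
  have hb2 : b ^ 2 = 1 + R⁻¹ ^ 2 * ‖u‖ ^ 2 := by
    rw [hb, v0]; exact Real.sq_sqrt (by positivity)
  have ha0 : 0 < a := by rw [ha, v0]; exact Real.sqrt_pos.2 (by positivity)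
  have hb0 : 0 < b := by rw [hb, v0]; exact Real.sqrt_pos.2 (by positivity)
  have ha1 : 1 ≤ a := by nlinarith only [ha2, ha0, sq_nonneg (R⁻¹ * ‖v‖)]
  have hb1 : 1 ≤ b := by nlinarith only [hb2, hb0, sq_nonneg (R⁻¹ * ‖u‖)]
  have hva : R⁻¹ * ‖v‖ ≤ a := by
    refine Stmt16.sqle (by positivity) ha0.le ?_
    rw [ha2]; nlinarith only []
  have hvb : R⁻¹ * ‖u‖ ≤ b := by
    refine Stmt16.sqle (by positivity) hb0.le ?_
    rw [hb2]; nlinarith only []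
  have hab1 : 1 ≤ a * b := by nlinarith only [ha1, hb1]
  have hd0 : (0:ℝ) < ‖v - u‖ := by
    rw [norm_pos_iff]; exact sub_ne_zero.2 hvu
  have hm0 : (0:ℝ) < ‖v + u‖ := by rwa [norm_pos_iff]
  have hCS : ip ^ 2 ≤ ‖v‖ ^ 2 * ‖u‖ ^ 2 := by
    have h1 := abs_real_inner_le_norm v u
    have h2 := sq_le_sq' (neg_le_of_abs_le h1) (le_of_abs_le h1)
    calc ip ^ 2 ≤ (‖v‖ * ‖u‖) ^ 2 := h2
      _ = ‖v‖ ^ 2 * ‖u‖ ^ 2 := by ring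
  have hsub : ‖v - u‖ ^ 2 = ‖v‖ ^ 2 - 2 * ip + ‖u‖ ^ 2 := norm_sub_sq_real v u
  have hab2 : a ^ 2 * b ^ 2
      = 1 + R⁻¹ ^ 2 * ‖v‖ ^ 2 + R⁻¹ ^ 2 * ‖u‖ ^ 2 + R⁻¹ ^ 2 * R⁻¹ ^ 2 * (‖v‖ ^ 2 * ‖u‖ ^ 2) := by
    rw [ha2, hb2]; ring
  have hCS4 : R⁻¹ ^ 2 * R⁻¹ ^ 2 * ip ^ 2 ≤ R⁻¹ ^ 2 * R⁻¹ ^ 2 * (‖v‖ ^ 2 * ‖u‖ ^ 2) :=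
    mul_le_mul_of_nonneg_left hCS (by positivity)
  have hsub2 : R⁻¹ ^ 2 * ‖v - u‖ ^ 2
      = R⁻¹ ^ 2 * ‖v‖ ^ 2 - 2 * (R⁻¹ ^ 2 * ip) + R⁻¹ ^ 2 * ‖u‖ ^ 2 := by
    rw [hsub]; ring
  have hkey : R⁻¹ ^ 2 * ‖v - u‖ ^ 2 ≤ a ^ 2 * b ^ 2 - (1 + R⁻¹ ^ 2 * ip) ^ 2 := by
    linarith only [hsub2, hab2, hCS4]
  have hvalpos : 0 < 2 * a * b - 2 - 2 * R⁻¹ ^ 2 * ip := by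
    have hpos : 0 < R⁻¹ ^ 2 * ‖v - u‖ ^ 2 := by positivity
    rcases le_or_gt (a * b) (1 + R⁻¹ ^ 2 * ip) with h | h
    · exfalso
      have h2 : (a * b) ^ 2 ≤ (1 + R⁻¹ ^ 2 * ip) ^ 2 :=
        pow_le_pow_left₀ (mul_pos ha0 hb0).le h 2
      nlinarith only [hkey, hpos, h2]
    · linarith only [h]
  have hg2 : g ^ 2 = 2 * a * b - 2 - 2 * R⁻¹ ^ 2 * ip := by
    rw [hgdef, gRel, ← ha, ← hb, ← hip]
    exact Real.sq_sqrt hvalpos.le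
  have hg0 : 0 < g := by
    rw [hgdef, gRel, ← ha, ← hb, ← hip]; exact Real.sqrt_pos.2 hvalpos
  have hσ2 : σ ^ 2 = 4 + g ^ 2 := by
    rw [hσdef, sRel, ← hgdef]; exact Real.sq_sqrt (by positivity)
  have hσ0 : 0 < σ := by
    rw [hσdef]; refine Real.sqrt_pos.2 ?_
    rw [sRel, ← hgdef]; positivity
  have hgσ : g ≤ σ := Stmt16.sqle hg0.le hσ0.le (by nlinarith only [hσ2])
  set τ := Real.sqrt (a * b) with hτdef
  have hτ2 : τ ^ 2 = a * b := by rw [hτdef]; exact Real.sq_sqrt (by positivity)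
  have hτ0 : 0 < τ := by rw [hτdef]; exact Real.sqrt_pos.2 (by positivity)
  have hτ1 : 1 ≤ τ := Stmt16.sqle zero_le_one hτ0.le (by nlinarith only [hτ2, hab1])
  have hip_ab : R⁻¹ ^ 2 * ip ≤ a * b := by
    have h1 : ip ≤ ‖v‖ * ‖u‖ :=
      le_trans (le_abs_self ip) (abs_real_inner_le_norm v u)
    nlinarith only [mul_le_mul hva hvb (by positivity) ha0.le,
      mul_le_mul_of_nonneg_left h1 (sq_nonneg R⁻¹)]
  have hg2up : g ^ 2 ≤ 4 * (a * b) := by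
    have h1 : -(‖v‖ * ‖u‖) ≤ ip := neg_le_of_abs_le (abs_real_inner_le_norm v u)
    nlinarith only [hg2, mul_le_mul hva hvb (by positivity) ha0.le,
      mul_le_mul_of_nonneg_left h1 (sq_nonneg R⁻¹)]
  have hg2τ : g ≤ 2 * τ := Stmt16.sqle hg0.le (by positivity) (by nlinarith only [hg2up, hτ2])
  have hab_ip : 1 ≤ a * b - R⁻¹ ^ 2 * ip := by nlinarith only [hg2, sq_nonneg g]
  -- `a*b*σ^2 ≥ a^2+b^2` and consequences
  have hprod : 1 + R⁻¹ ^ 2 * ‖v‖ ^ 2 + R⁻¹ ^ 2 * ‖u‖ ^ 2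
      ≤ (a * b - R⁻¹ ^ 2 * ip) * (a * b + R⁻¹ ^ 2 * ip) := by
    nlinarith only [hab2, hCS4]
  have hσ2ab : a * b * σ ^ 2 = a * b * (2 + 2 * (a * b) - 2 * (R⁻¹ ^ 2 * ip)) := by
    rw [hσ2, hg2]; ring
  have habs : a ^ 2 + b ^ 2 ≤ a * b * σ ^ 2 := by
    have hmm : 0 ≤ (a * b - R⁻¹ ^ 2 * ip) * (2 * (a * b) - (a * b + R⁻¹ ^ 2 * ip)) :=
      mul_nonneg (by linarith only [hab_ip]) (by linarith only [hip_ab])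
    nlinarith only [hσ2ab, hmm, hprod, ha2, hb2, hab1]
  have hσ4ab : 4 * (a * b) ≤ a * b * σ ^ 2 := by
    have h4 : (4:ℝ) ≤ σ ^ 2 := by linarith only [hσ2, sq_nonneg g]
    nlinarith only [mul_le_mul_of_nonneg_left h4 (mul_pos ha0 hb0).le]
  have hsum2 : (a + b) ^ 2 ≤ 2 * (a * b) * σ ^ 2 := by
    nlinarith only [habs, hσ4ab]
  have habσ : a ≤ b * σ ^ 2 := by nlinarith only [habs, ha0, sq_nonneg b]
  have hdle : ‖v - u‖ ≤ 2 * b * (R * a) := by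
    have h1 : ‖v - u‖ ≤ ‖v‖ + ‖u‖ := norm_sub_le v u
    have h2 : ‖v‖ ≤ R * a := by
      have := mul_le_mul_of_nonneg_left hva hR0.le
      rwa [← mul_assoc, hRR, one_mul] at this
    have h3 : ‖u‖ ≤ R * b := by
      have := mul_le_mul_of_nonneg_left hvb hR0.le
      rwa [← mul_assoc, hRR, one_mul] at this
    nlinarith only [h1, h2, h3, hR0.le,
      mul_nonneg hR0.le (mul_nonneg (sub_nonneg.2 ha1) (sub_nonneg.2 hb1)),
      mul_nonneg hR0.le (sub_nonneg.2 hab1)]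
  have hεlow : 2 * (R⁻¹ ^ 2 * ‖v - u‖ ^ 2) ≤ 3 * (a * b) * g ^ 2 := by
    have h3ab : 0 ≤ 2 * (a * b) - (1 + R⁻¹ ^ 2 * ip) := by linarith only [hip_ab, hab1]
    have habw : 0 ≤ a * b - (1 + R⁻¹ ^ 2 * ip) := by linarith only [hab_ip]
    have hg2ab : a * b * g ^ 2 = a * b * (2 * a * b - 2 - 2 * R⁻¹ ^ 2 * ip) := by
      rw [hg2]
    nlinarith only [hkey, hg2ab, mul_nonneg habw h3ab]
  have hRR2 : R ^ 2 * R⁻¹ ^ 2 = 1 := by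
    rw [← mul_pow, hRR, one_pow]
  have hg2lowR : 2 * ‖v - u‖ ^ 2 ≤ R ^ 2 * (3 * (a * b) * g ^ 2) := by
    have h' := mul_le_mul_of_nonneg_left hεlow (sq_nonneg R)
    calc 2 * ‖v - u‖ ^ 2 = R ^ 2 * (2 * (R⁻¹ ^ 2 * ‖v - u‖ ^ 2)) := by
          rw [show R ^ 2 * (2 * (R⁻¹ ^ 2 * ‖v - u‖ ^ 2))
              = R ^ 2 * R⁻¹ ^ 2 * (2 * ‖v - u‖ ^ 2) by ring, hRR2, one_mul]
      _ ≤ R ^ 2 * (3 * (a * b) * g ^ 2) := h'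
  -- ### atomic directional-derivative bounds
  have heV : ‖eV‖ = 1 := by
    rw [heVdef, EuclideanSpace.norm_single, norm_one]
  have hvei : |(inner ℝ v eV : ℝ)| ≤ ‖v‖ := by
    simpa [heV] using abs_real_inner_le_norm v eV
  have huei : |(inner ℝ eV u : ℝ)| ≤ ‖u‖ := by
    simpa [heV] using abs_real_inner_le_norm eV u
  have hωei : |(inner ℝ eV ω : ℝ)| ≤ 1 := by
    simpa [heV, hω] using abs_real_inner_le_norm eV ω
  have hnei : |(inner ℝ (v + u) eV : ℝ)| ≤ ‖v + u‖ := by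
    simpa [heV] using abs_real_inner_le_norm (v + u) eV
  have heVk : |eV k| ≤ 1 := by
    rw [heVdef, EuclideanSpace.single_apply]
    split <;> simp
  have hωk : |ω k| ≤ 1 := by
    have h1 := abs_real_inner_le_norm ω (EuclideanSpace.single k (1:ℝ))
    simpa [EuclideanSpace.inner_single_right, EuclideanSpace.norm_single, hω] using h1
  have hnk : |(v + u) k| ≤ ‖v + u‖ := by
    have h1 := abs_real_inner_le_norm (v + u) (EuclideanSpace.single k (1:ℝ))
    simpa [EuclideanSpace.inner_single_right, EuclideanSpace.norm_single] using h1
  have hPb : |(inner ℝ (v + u) ω : ℝ)| ≤ ‖v + u‖ := by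
    simpa [hω] using abs_real_inner_le_norm (v + u) ω
  -- ### named derivative atoms
  set dA : ℝ := R⁻¹ ^ 2 * (inner ℝ v eV : ℝ) / a with hdAdef
  set dh : ℝ := 2 * b * dA - 2 * R⁻¹ ^ 2 * (inner ℝ eV u : ℝ) with hdhdef
  set dg : ℝ := dh / (2 * g) with hdgdef
  set dσ : ℝ := dh / (2 * σ) with hdσdef
  set dP : ℝ := (inner ℝ eV ω : ℝ) with hdPdef
  set P : ℝ := (inner ℝ (v + u) ω : ℝ) with hPdef
  set dN : ℝ := 2 * (inner ℝ (v + u) eV : ℝ) with hdNdef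
  set dQ : ℝ := ((P * eV k + (v + u) k * dP) * ‖v + u‖ ^ 2 - P * (v + u) k * dN) / ‖v + u‖ ^ 4
    with hdQdef
  set Q : ℝ := P * (v + u) k / ‖v + u‖ ^ 2 with hQdef
  set T : ℝ := (a + b) / σ with hTdef
  set dT : ℝ := (dA * σ - (a + b) * dσ) / σ ^ 2 with hdTdef
  set B : ℝ := ω k - Q + T * Q with hBdef
  set dB : ℝ := -dQ + (T * dQ + Q * dT) with hdBdef
  -- ### nonvanishing facts in raw form
  have hvalne : 2 * v0 R v * v0 R u - 2 - 2 * R⁻¹ ^ 2 * (inner ℝ v u : ℝ) ≠ 0 := by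
    rw [← ha, ← hb, ← hip]; exact hvalpos.ne'
  have hgS : Real.sqrt (2 * v0 R v * v0 R u - 2 - 2 * R⁻¹ ^ 2 * (inner ℝ v u : ℝ)) = g := by
    rw [hgdef, gRel]
  have haS : Real.sqrt (1 + R⁻¹ ^ 2 * ‖v‖ ^ 2) = a := by rw [ha, v0]
  have hradne : (1 + R⁻¹ ^ 2 * ‖v‖ ^ 2) ≠ 0 := by positivity
  have hσS : Real.sqrt (sRel R v u) = σ := by rw [hσdef]
  have hsne : sRel R v u ≠ 0 := by
    have : 0 < sRel R v u := by rw [sRel, ← hgdef]; positivity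
    exact this.ne'
  have hNne : ‖v + u‖ ^ 2 ≠ 0 := by positivity
  -- ### the derivative chain
  have h1 : Stmt16.HD v i (fun x : E3 => ‖x‖ ^ 2) (2 * (inner ℝ v eV : ℝ)) := by
    have := Stmt16.hd_normsq (v := v) (i := i)
    rwa [← heVdef] at this
  have h2 : Stmt16.HD v i (fun x : E3 => 1 + R⁻¹ ^ 2 * ‖x‖ ^ 2)
      (0 + (R⁻¹ ^ 2 * (2 * (inner ℝ v eV : ℝ)) + ‖v‖ ^ 2 * 0)) :=
    (Stmt16.hd_const 1).add ((Stmt16.hd_const (R⁻¹ ^ 2)).mul h1)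
  have hA : Stmt16.HD v i (fun x : E3 => v0 R x) dA :=
    (h2.sqrt hradne).congr_d (by beta_reduce; rw [haS, hdAdef]; field_simp; ring)
  have hm1 : Stmt16.HD v i (fun x : E3 => 2 * v0 R x) (2 * dA) :=
    ((Stmt16.hd_const 2).mul hA).congr_d (by beta_reduce; ring)
  have hm2 : Stmt16.HD v i (fun x : E3 => 2 * v0 R x * v0 R u) (b * (2 * dA)) :=
    (hm1.mul (Stmt16.hd_const (v0 R u))).congr_d (by beta_reduce; rw [← hb]; ring)
  have hm3 : Stmt16.HD v i (fun x : E3 => 2 * v0 R x * v0 R u - 2) (b * (2 * dA) - 0) :=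
    hm2.sub (Stmt16.hd_const 2)
  have hm4 : Stmt16.HD v i (fun x : E3 => 2 * R⁻¹ ^ 2 * (inner ℝ x u : ℝ))
      (2 * R⁻¹ ^ 2 * (inner ℝ eV u : ℝ)) :=
    ((Stmt16.hd_const (2 * R⁻¹ ^ 2)).mul (Stmt16.hd_inner_right u)).congr_d
      (by beta_reduce; rw [heVdef]; ring)
  have hm5 : Stmt16.HD v i
      (fun x : E3 => 2 * v0 R x * v0 R u - 2 - 2 * R⁻¹ ^ 2 * (inner ℝ x u : ℝ)) dh :=
    (hm3.sub hm4).congr_d (by rw [hdhdef]; ring)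
  have hg' : Stmt16.HD v i (fun x : E3 => gRel R x u) dg :=
    (hm5.sqrt hvalne).congr_d (by beta_reduce; rw [hgS, hdgdef])
  have hs' : Stmt16.HD v i (fun x : E3 => sRel R x u) dh :=
    ((Stmt16.hd_const 4).add hg'.pow2).congr_d
      (by beta_reduce; rw [← hgdef, hdgdef]; field_simp; ring)
  have hσ' : Stmt16.HD v i (fun x : E3 => Real.sqrt (sRel R x u)) dσ :=
    (hs'.sqrt hsne).congr_d (by beta_reduce; rw [hσS, hdσdef])
  have hP' : Stmt16.HD v i (fun x : E3 => (inner ℝ (x + u) ω : ℝ)) dP :=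
    (Stmt16.hd_inner_shift u ω).congr_d (by rw [hdPdef, heVdef])
  have hnk' : Stmt16.HD v i (fun x : E3 => (x + u) k) (eV k + 0) := by
    have h3 : (fun x : E3 => (x + u) k) = fun x : E3 => x k + u k := rfl
    rw [h3]
    have := (Stmt16.hd_apply (v := v) (i := i) k).add (Stmt16.hd_const (u k))
    rwa [← heVdef] at this
  have hN' : Stmt16.HD v i (fun x : E3 => ‖x + u‖ ^ 2) dN :=
    (Stmt16.hd_normsq_shift u).congr_d (by rw [hdNdef, heVdef])
  have hQ' : Stmt16.HD v i
      (fun x : E3 => (inner ℝ (x + u) ω : ℝ) * (x + u) k / ‖x + u‖ ^ 2) dQ :=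
    ((hP'.mul hnk').div hN' hNne).congr_d
      (by beta_reduce; rw [← hPdef, hdQdef]; ring)
  have hσne' : Real.sqrt (sRel R v u) ≠ 0 := by rw [hσS]; exact hσ0.ne'
  have hT' : Stmt16.HD v i
      (fun x : E3 => (v0 R x + v0 R u) / Real.sqrt (sRel R x u)) dT :=
    ((hA.add (Stmt16.hd_const (v0 R u))).div hσ' hσne').congr_d
      (by beta_reduce; rw [← ha, ← hb, hσS, hdTdef]; ring)
  have hB' : Stmt16.HD v i
      (fun x : E3 => ω k - (inner ℝ (x + u) ω : ℝ) * (x + u) k / ‖x + u‖ ^ 2 +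
        (v0 R x + v0 R u) / Real.sqrt (sRel R x u) *
          ((inner ℝ (x + u) ω : ℝ) * (x + u) k / ‖x + u‖ ^ 2)) dB :=
    (((Stmt16.hd_const (ω k)).sub hQ').add (hT'.mul hQ')).congr_d
      (by beta_reduce; rw [← ha, ← hb, hσS, ← hPdef, ← hQdef, ← hTdef, hdBdef]; ring)
  have hRg : Stmt16.HD v i (fun x : E3 => R * gRel R x u / 2) (R * dg / 2) := by
    have h4 : Stmt16.HD v i (fun x : E3 => R * gRel R x u) (R * dg) :=
      ((Stmt16.hd_const R).mul hg').congr_d (by beta_reduce; ring)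
    exact (h4.div (Stmt16.hd_const 2) two_ne_zero).congr_d (by beta_reduce; ring)
  have hvk : Stmt16.HD v i (fun x : E3 => (x k + u k) / 2) (eV k / 2) := by
    have h4 : Stmt16.HD v i (fun x : E3 => x k + u k) (eV k + 0) := by
      have := (Stmt16.hd_apply (v := v) (i := i) k).add (Stmt16.hd_const (u k))
      rwa [← heVdef] at this
    exact (h4.div (Stmt16.hd_const 2) two_ne_zero).congr_d (by beta_reduce; ring)
  set dF : ℝ := eV k / 2 + (R * g / 2 * dB + B * (R * dg / 2)) with hdFdef
  have hF : Stmt16.HD v i (vprimeSK R u ω k) dF :=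
    (hvk.add (hRg.mul hB')).congr_d
      (by beta_reduce; rw [← hgdef, ← ha, ← hb, hσS, ← hPdef, ← hQdef,
        ← hTdef, ← hBdef, hdFdef]; try ring)
  have hpd : pderiv i (vprimeSK R u ω k) v = dF := hF.pderiv_eq
  rw [hpd]
  -- ### bounds on the atoms
  have hdAb : |dA| ≤ R⁻¹ := by
    rw [hdAdef, abs_div, abs_mul, abs_of_nonneg (sq_nonneg R⁻¹), abs_of_pos ha0,
      div_le_iff₀ ha0]
    calc R⁻¹ ^ 2 * |(inner ℝ v eV : ℝ)| ≤ R⁻¹ ^ 2 * ‖v‖ :=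
          mul_le_mul_of_nonneg_left hvei (sq_nonneg R⁻¹)
      _ = R⁻¹ * (R⁻¹ * ‖v‖) := by ring
      _ ≤ R⁻¹ * a := mul_le_mul_of_nonneg_left hva hRi0.le
  have hdhb : |dh| ≤ 4 * R⁻¹ * b := by
    rw [hdhdef]
    calc |2 * b * dA - 2 * R⁻¹ ^ 2 * (inner ℝ eV u : ℝ)|
        ≤ |2 * b * dA| + |2 * R⁻¹ ^ 2 * (inner ℝ eV u : ℝ)| := Stmt16.tri _ _
      _ = 2 * b * |dA| + 2 * R⁻¹ ^ 2 * |(inner ℝ eV u : ℝ)| := by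
          rw [abs_mul, abs_mul, abs_mul, abs_mul, abs_two, abs_of_pos hb0,
            abs_of_nonneg (sq_nonneg R⁻¹)]
      _ ≤ 2 * b * R⁻¹ + 2 * R⁻¹ ^ 2 * ‖u‖ := by
          gcongr
      _ ≤ 4 * R⁻¹ * b := by
          nlinarith only [mul_le_mul_of_nonneg_left hvb
            (by positivity : (0:ℝ) ≤ 2 * R⁻¹)]
  have hdgb : |dg| ≤ 2 * R⁻¹ * b / g := by
    rw [hdgdef, abs_div, abs_of_pos (by positivity : (0:ℝ) < 2 * g)]
    calc |dh| / (2 * g) ≤ (4 * R⁻¹ * b) / (2 * g) := by gcongr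
      _ = 2 * R⁻¹ * b / g := by field_simp; ring
  have hdPb : |dP| ≤ 1 := by rw [hdPdef]; exact hωei
  have hdNb : |dN| ≤ 2 * ‖v + u‖ := by
    rw [hdNdef, abs_mul, abs_two]
    nlinarith only [hnei]
  have hQb : |Q| ≤ 1 := by
    rw [hQdef, abs_div, abs_of_pos (by positivity : (0:ℝ) < ‖v + u‖ ^ 2),
      div_le_one (by positivity)]
    calc |P * (v + u) k| = |P| * |(v + u) k| := abs_mul _ _
      _ ≤ ‖v + u‖ * ‖v + u‖ := mul_le_mul hPb hnk (abs_nonneg _) hm0.le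
      _ = ‖v + u‖ ^ 2 := by ring
  have hdQb : |dQ| ≤ 4 / ‖v + u‖ := by
    have t1 : |P * eV k + (v + u) k * dP| ≤ 2 * ‖v + u‖ := by
      calc |P * eV k + (v + u) k * dP| ≤ |P * eV k| + |(v + u) k * dP| := abs_add_le _ _
        _ = |P| * |eV k| + |(v + u) k| * |dP| := by rw [abs_mul, abs_mul]
        _ ≤ ‖v + u‖ * 1 + ‖v + u‖ * 1 := by
            refine add_le_add (mul_le_mul hPb heVk (abs_nonneg _) hm0.le)
              (mul_le_mul hnk hdPb (abs_nonneg _) hm0.le)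
        _ = 2 * ‖v + u‖ := by ring
    have hnum : |(P * eV k + (v + u) k * dP) * ‖v + u‖ ^ 2 - P * (v + u) k * dN|
        ≤ 4 * ‖v + u‖ ^ 3 := by
      calc |(P * eV k + (v + u) k * dP) * ‖v + u‖ ^ 2 - P * (v + u) k * dN|
          ≤ |(P * eV k + (v + u) k * dP) * ‖v + u‖ ^ 2| + |P * (v + u) k * dN| :=
            Stmt16.tri _ _
        _ = |P * eV k + (v + u) k * dP| * ‖v + u‖ ^ 2 + |P| * |(v + u) k| * |dN| := by
            rw [abs_mul, abs_mul, abs_mul, abs_of_nonneg (by positivity : (0:ℝ) ≤ ‖v + u‖ ^ 2)]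
        _ ≤ 2 * ‖v + u‖ * ‖v + u‖ ^ 2 + ‖v + u‖ * ‖v + u‖ * (2 * ‖v + u‖) := by
            refine add_le_add (mul_le_mul_of_nonneg_right t1 (by positivity)) ?_
            refine mul_le_mul (mul_le_mul hPb hnk (abs_nonneg _) hm0.le) hdNb
              (abs_nonneg _) (by positivity)
        _ = 4 * ‖v + u‖ ^ 3 := by ring
    rw [hdQdef, abs_div, abs_of_pos (by positivity : (0:ℝ) < ‖v + u‖ ^ 4),
      div_le_div_iff₀ (by positivity) hm0]
    calc |(P * eV k + (v + u) k * dP) * ‖v + u‖ ^ 2 - P * (v + u) k * dN| * ‖v + u‖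
        ≤ 4 * ‖v + u‖ ^ 3 * ‖v + u‖ := mul_le_mul_of_nonneg_right hnum hm0.le
      _ = 4 * ‖v + u‖ ^ 4 := by ring
  have hT0 : 0 < T := by
    rw [hTdef]; exact div_pos (by linarith only [ha1, hb1]) hσ0
  have hg2σ : g ^ 2 ≤ σ ^ 2 := by nlinarith only [hσ2]
  have hTb : T ≤ 3 / 2 * τ := by
    rw [hTdef, div_le_iff₀ hσ0]
    refine Stmt16.sqle (by linarith only [ha1, hb1]) (by positivity) ?_
    have e1 : τ ^ 2 * σ ^ 2 = a * b * σ ^ 2 := by rw [hτ2]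
    nlinarith only [hsum2, e1, mul_nonneg (mul_pos ha0 hb0).le (sq_nonneg σ)]
  have hBb : |B| ≤ 4 * τ := by
    rw [hBdef]
    calc |ω k - Q + T * Q| ≤ |ω k - Q| + |T * Q| := abs_add_le _ _
      _ ≤ (|ω k| + |Q|) + |T| * |Q| := by
          rw [abs_mul]; exact add_le_add (Stmt16.tri _ _) le_rfl
      _ ≤ (1 + 1) + 3 / 2 * τ * 1 := by
          refine add_le_add (add_le_add hωk hQb) ?_
          rw [abs_of_pos hT0]
          exact mul_le_mul hTb hQb (abs_nonneg _) (by positivity)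
      _ ≤ 4 * τ := by linarith only [hτ1]
  -- ### the three term bounds
  have hterm2 : |B| * (R * |dg| / 2) ≤ 6 * R * a * b ^ 2 / ‖v - u‖ := by
    calc |B| * (R * |dg| / 2) ≤ (4 * τ) * (R * (2 * R⁻¹ * b / g) / 2) := by
          refine mul_le_mul hBb ?_ (by positivity) (by positivity)
          gcongr
      _ = 4 * τ * b / g := by field_simp
      _ ≤ 6 * R * a * b ^ 2 / ‖v - u‖ := by
          rw [div_le_div_iff₀ hg0 hd0]
          refine Stmt16.sqle (by positivity) (by positivity) ?_
          have e1 : τ ^ 2 * (b ^ 2 * ‖v - u‖ ^ 2) = a * b * (b ^ 2 * ‖v - u‖ ^ 2) := by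
            rw [hτ2]
          nlinarith only [e1, mul_le_mul_of_nonneg_left hg2lowR
            (by positivity : (0:ℝ) ≤ 8 * (a * b) * b ^ 2)]
  have hterm3 : R * g / 2 * ((1 + T) * |dQ|) ≤ 10 * R * (a * b) / ‖v + u‖ := by
    calc R * g / 2 * ((1 + T) * |dQ|)
        ≤ R * (2 * τ) / 2 * ((1 + 3 / 2 * τ) * (4 / ‖v + u‖)) := by
          refine mul_le_mul (by gcongr) ?_ (by positivity) (by positivity)
          refine mul_le_mul (by linarith only [hTb]) hdQb (abs_nonneg _) (by positivity)
      _ ≤ R * (2 * τ) / 2 * ((5 / 2 * τ) * (4 / ‖v + u‖)) := by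
          refine mul_le_mul_of_nonneg_left ?_ (by positivity)
          refine mul_le_mul_of_nonneg_right (by linarith only [hτ1]) (by positivity)
      _ = 10 * R * τ ^ 2 / ‖v + u‖ := by field_simp; ring
      _ = 10 * R * (a * b) / ‖v + u‖ := by rw [hτ2]
  have hkeyT : g * (a + b) ≤ 3 / 2 * (b * σ ^ 3) := by
    refine Stmt16.sqle (mul_nonneg hg0.le (by linarith only [ha1, hb1])) (by positivity) ?_
    nlinarith only [mul_le_mul_of_nonneg_right hg2σ (sq_nonneg (a + b)),
      mul_le_mul_of_nonneg_left hsum2 (sq_nonneg σ),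
      mul_le_mul_of_nonneg_left habσ (by positivity : (0:ℝ) ≤ 2 * b * σ ^ 4),
      mul_nonneg (sq_nonneg b) (by positivity : (0:ℝ) ≤ σ ^ 6)]
  have hterm4 : R * g / 2 * |dT| ≤ 1 / 2 + 3 / 2 * b ^ 2 := by
    have hdσb : |dσ| ≤ 4 * R⁻¹ * b / (2 * σ) := by
      rw [hdσdef, abs_div, abs_of_pos (by positivity : (0:ℝ) < 2 * σ)]
      gcongr
    have hnum : |dA * σ - (a + b) * dσ| ≤ R⁻¹ * σ + (a + b) * (4 * R⁻¹ * b / (2 * σ)) := by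
      calc |dA * σ - (a + b) * dσ| ≤ |dA * σ| + |(a + b) * dσ| := Stmt16.tri _ _
        _ = |dA| * σ + (a + b) * |dσ| := by
            rw [abs_mul, abs_mul, abs_of_pos hσ0,
              abs_of_nonneg (by linarith only [ha1, hb1] : (0:ℝ) ≤ a + b)]
        _ ≤ R⁻¹ * σ + (a + b) * (4 * R⁻¹ * b / (2 * σ)) := by
            refine add_le_add (mul_le_mul_of_nonneg_right hdAb hσ0.le)
              (mul_le_mul_of_nonneg_left hdσb (by linarith only [ha1, hb1]))
    have hdTabs : |dT| ≤ (R⁻¹ * σ + (a + b) * (4 * R⁻¹ * b / (2 * σ))) / σ ^ 2 := by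
      rw [hdTdef, abs_div, abs_of_nonneg (sq_nonneg σ)]
      gcongr
    calc R * g / 2 * |dT|
        ≤ R * g / 2 * ((R⁻¹ * σ + (a + b) * (4 * R⁻¹ * b / (2 * σ))) / σ ^ 2) :=
          mul_le_mul_of_nonneg_left hdTabs (by positivity)
      _ = g / (2 * σ) + g * (a + b) * b / σ ^ 3 := by
          field_simp
          ring
      _ ≤ 1 / 2 + 3 / 2 * b ^ 2 := by
          have e1 : g / (2 * σ) ≤ 1 / 2 := by
            rw [div_le_iff₀ (by positivity)]; linarith only [hgσ]
          have e2 : g * (a + b) * b / σ ^ 3 ≤ 3 / 2 * b ^ 2 := by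
            rw [div_le_iff₀ (by positivity)]
            nlinarith only [mul_le_mul_of_nonneg_right hkeyT hb0.le]
          linarith only [e1, e2]
  -- ### assembling everything
  have hdBb : |dB| ≤ (1 + T) * |dQ| + |dT| := by
    rw [hdBdef]
    calc |-dQ + (T * dQ + Q * dT)| ≤ |dQ| + (|T| * |dQ| + |Q| * |dT|) := by
          refine (abs_add_le _ _).trans ?_
          rw [abs_neg]
          exact add_le_add le_rfl ((abs_add_le _ _).trans (by rw [abs_mul, abs_mul]))
      _ ≤ (1 + T) * |dQ| + |dT| := by
          rw [abs_of_pos hT0]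
          nlinarith only [mul_le_mul_of_nonneg_right hQb (abs_nonneg dT)]
  have habs1 : |dF| ≤ 1 / 2 + (R * g / 2 * |dB| + |B| * (R * |dg| / 2)) := by
    rw [hdFdef]
    have b1 : |R * g / 2 * dB| = R * g / 2 * |dB| := by
      rw [abs_mul, abs_of_nonneg (by positivity : (0:ℝ) ≤ R * g / 2)]
    have b2 : |B * (R * dg / 2)| = |B| * (R * |dg| / 2) := by
      rw [abs_mul]
      congr 1
      rw [abs_div, abs_mul, abs_of_pos hR0, abs_two]
    calc |eV k / 2 + (R * g / 2 * dB + B * (R * dg / 2))|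
        ≤ |eV k / 2| + |R * g / 2 * dB + B * (R * dg / 2)| := abs_add_le _ _
      _ ≤ |eV k| / 2 + (|R * g / 2 * dB| + |B * (R * dg / 2)|) := by
          rw [abs_div, abs_two]
          exact add_le_add le_rfl (abs_add_le _ _)
      _ ≤ 1 / 2 + (R * g / 2 * |dB| + |B| * (R * |dg| / 2)) := by
          rw [b1, b2]
          exact add_le_add (by linarith only [heVk]) le_rfl
  have hX1 : 1 ≤ 2 * b * (R * a / ‖v - u‖) := by
    have h5 : 1 ≤ 2 * b * (R * a) / ‖v - u‖ := (one_le_div hd0).2 hdle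
    have heq : 2 * b * (R * a) / ‖v - u‖ = 2 * b * (R * a / ‖v - u‖) := by ring
    linarith only [h5, heq.le, heq.ge]
  have hX0 : (0:ℝ) < R * a / ‖v - u‖ := by positivity
  have hY0 : (0:ℝ) < R * a / ‖v + u‖ := by positivity
  have hZ0 : (0:ℝ) ≤ R ^ 2 * a ^ 2 / ‖v - u‖ ^ 2 := by positivity
  have e3 : 6 * R * a * b ^ 2 / ‖v - u‖ = 6 * (R * a / ‖v - u‖) * b ^ 2 := by ring
  have e4 : 10 * R * (a * b) / ‖v + u‖ = 10 * (R * a / ‖v + u‖) * b := by ring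
  calc |dF| ≤ 1 / 2 + (R * g / 2 * |dB| + |B| * (R * |dg| / 2)) := habs1
    _ ≤ 1 / 2 + (R * g / 2 * ((1 + T) * |dQ| + |dT|) + 6 * R * a * b ^ 2 / ‖v - u‖) := by
        exact add_le_add le_rfl (add_le_add
          (mul_le_mul_of_nonneg_left hdBb (by positivity)) hterm2)
    _ = 1 / 2 + (R * g / 2 * ((1 + T) * |dQ|) + R * g / 2 * |dT|
          + 6 * R * a * b ^ 2 / ‖v - u‖) := by ring
    _ ≤ 1 / 2 + (10 * R * (a * b) / ‖v + u‖ + (1 / 2 + 3 / 2 * b ^ 2)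
          + 6 * R * a * b ^ 2 / ‖v - u‖) := by
        exact add_le_add le_rfl (add_le_add (add_le_add hterm3 hterm4) le_rfl)
    _ ≤ 100 * (R * a / ‖v - u‖ + R * a / ‖v + u‖
          + R ^ 2 * a ^ 2 / ‖v - u‖ ^ 2) * b ^ 3 := by
        rw [e3, e4]
        exact Stmt16.endgame hb1 hX1 hX0 hY0 hZ0

end
end
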